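/- arXiv:0706.0973 — 10 statements merged into one kernel-verified Lean document; each statement's English description precedes it below -/
import Mathlib

section
/- Let H = {w ∈ ℂ : Re w < 0} be the left half-plane and let g : H → ℂ be holomorphic with g'(w) ≠ 0 and |g(w)| ≠ 1 for every w ∈ H. Suppose there exists T ∈ SU(1,1) such that (T₂₁·g(w) + T₂₂)·g(w+2πi) = T₁₁·g(w) + T₁₂ for all w ∈ H. Then T is not hyperbolic: there exist no P ∈ SU(1,1), ε ∈ {1,−1} and t > 0 with P⁻¹TP = ε·Λ_h(t). (This is the paper's Corollary: the monodromy of a conformal hyperbolic metric on the punctured disk is either elliptic or parabolic; hyperbolic monodromy never occurs.) -/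
open Complex Matrix Metric

noncomputable section

/-- The matrix `e₃ = diag(1,-1)`. -/
def e3 : Matrix (Fin 2) (Fin 2) ℂ := !![1, 0; 0, -1]

/-- `SU(1,1)`: matrices of determinant 1 with `S e₃ S* = e₃`. -/
def SU11 (S : Matrix (Fin 2) (Fin 2) ℂ) : Prop :=
  S.det = 1 ∧ S * e3 * Sᴴ = e3

/-- `Λ_h(t) = [[cosh t, sinh t],[sinh t, cosh t]]`. -/
def Λh (t : ℝ) : Matrix (Fin 2) (Fin 2) ℂ :=
  !![(Real.cosh t : ℂ), (Real.sinh t : ℂ); (Real.sinh t : ℂ), (Real.cosh t : ℂ)]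

open scoped ComplexConjugate
open Filter Topology

/-!
Let `h = P⁻¹ · g` under the Möbius action, replaced by `1 / h` if `g` takes values outside the unit
disk (the half-plane is connected and `|g| ≠ 1`, so `g` lands either entirely inside or entirely
outside). Then `h` maps the half-plane into the disk and `h(w + 2πi) = Λ_h(t) · h(w)`. The Cayley
transform followed by `log` maps the disk onto the strip `|Im| < π/2` and conjugates `Λ_h(t)` to the
translation by `2t`, so `F = log ((1 + h) / (1 - h))` satisfies `F(w + 2πi) = F(w) + 2t`. A Cauchy
estimate on the disk of radius `-Re w` gives `|F'(w)| = O(1 / |Re w|)`, hence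
`2t = F(w + 2πi) - F(w) → 0` as `Re w → -∞`.
-/

theorem IsPreconnected.forall_lt_or_forall_gt {X α : Type*} [TopologicalSpace X]
    [LinearOrder α] [TopologicalSpace α] [OrderClosedTopology α] {s : Set X}
    (hs : IsPreconnected s) {f : X → α} (hf : ContinuousOn f s) {c : α}
    (hc : ∀ x ∈ s, f x ≠ c) : (∀ x ∈ s, f x < c) ∨ ∀ x ∈ s, c < f x := by
  by_contra! ⟨⟨a, ha, hac⟩, ⟨b, hb, hcb⟩⟩
  obtain ⟨x, hx, hxc⟩ := hs.intermediate_value hb ha hf ⟨hcb, hac⟩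
  exact hc x hx hxc

lemma e3_conjTranspose : e3ᴴ = e3 := by
  ext i j; fin_cases i <;> fin_cases j <;> simp [e3]

lemma e3_mul_e3 : e3 * e3 = 1 := by
  ext i j; fin_cases i <;> fin_cases j <;> simp [e3]

lemma inv_eq_e3_mul_conjTranspose_mul_e3 {P : Matrix (Fin 2) (Fin 2) ℂ}
    (hP : P * e3 * Pᴴ = e3) : P⁻¹ = e3 * Pᴴ * e3 :=
  inv_eq_right_inv <| by rw [← Matrix.mul_assoc, ← Matrix.mul_assoc, hP, e3_mul_e3]

lemma conjTranspose_inv_mul_e3_mul_inv {P : Matrix (Fin 2) (Fin 2) ℂ}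
    (hP : P * e3 * Pᴴ = e3) : (P⁻¹)ᴴ * e3 * P⁻¹ = e3 := by
  rw [inv_eq_e3_mul_conjTranspose_mul_e3 hP]
  simp only [conjTranspose_mul, conjTranspose_conjTranspose, e3_conjTranspose]
  calc e3 * (P * e3) * e3 * (e3 * Pᴴ * e3) = e3 * (P * e3 * (e3 * e3) * Pᴴ) * e3 := by
        simp only [Matrix.mul_assoc]
    _ = e3 := by rw [e3_mul_e3, Matrix.mul_one, hP, e3_mul_e3, Matrix.one_mul]

lemma normSq_sub_normSq_of_conjTranspose_mul_e3_mul {S : Matrix (Fin 2) (Fin 2) ℂ}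
    (hS : Sᴴ * e3 * S = e3) (z : ℂ) :
    normSq (S 0 0 * z + S 0 1) - normSq (S 1 0 * z + S 1 1) = normSq z - 1 := by
  have h : ∀ i j, (Sᴴ * e3 * S) i j = e3 i j := by simp [hS]
  have h00 := h 0 0
  have h11 := h 1 1
  have h01 := h 0 1
  simp only [e3, Matrix.mul_apply, conjTranspose_apply, RCLike.star_def, of_apply, cons_val',
    cons_val_fin_one, Fin.sum_univ_two, cons_val_zero, cons_val_one, mul_one, mul_zero, add_zero,
    mul_neg, zero_add, neg_mul] at h00 h11 h01
  apply ofReal_injective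
  push_cast
  have h10 := congrArg (starRingEnd ℂ) h01
  simp only [← mul_conj, map_add, map_mul, map_neg, conj_conj, map_zero] at h10 ⊢
  linear_combination (z * conj z) * h00 + h11 + conj z * h01 + z * h10

def mobius (S : Matrix (Fin 2) (Fin 2) ℂ) (z : ℂ) : ℂ :=
  (S 0 0 * z + S 0 1) / (S 1 0 * z + S 1 1)

def IsMobiusImage (S : Matrix (Fin 2) (Fin 2) ℂ) (z z' : ℂ) : Prop :=
  (S 1 0 * z + S 1 1) * z' = S 0 0 * z + S 0 1

namespace IsMobiusImage

variable {R S A : Matrix (Fin 2) (Fin 2) ℂ} {z z' : ℂ}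

lemma mulVec_eq_smul (h : IsMobiusImage S z z') :
    S *ᵥ ![z, 1] = (S 1 0 * z + S 1 1) • ![z', 1] := by
  ext i; fin_cases i <;> simp [Matrix.mulVec, dotProduct, Fin.sum_univ_two, h.symm]

lemma mobius_of_mul_eq_mul (hRS : R * S = A * R) (h : IsMobiusImage S z z')
    (hz : R 1 0 * z + R 1 1 ≠ 0) (hz' : R 1 0 * z' + R 1 1 ≠ 0) :
    IsMobiusImage A (mobius R z) (mobius R z') := by
  have hv : A *ᵥ (R *ᵥ ![z, 1]) = (S 1 0 * z + S 1 1) • R *ᵥ ![z', 1] := by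
    rw [mulVec_mulVec, ← hRS, ← mulVec_mulVec, h.mulVec_eq_smul, mulVec_smul]
  have h0 := congrFun hv 0
  have h1 := congrFun hv 1
  simp only [Matrix.mulVec, dotProduct, Fin.sum_univ_two, Pi.smul_apply, smul_eq_mul,
    cons_val_zero, cons_val_one, mul_one] at h0 h1
  unfold IsMobiusImage mobius
  generalize R 0 0 * z + R 0 1 = a, R 0 0 * z' + R 0 1 = a' at *
  generalize R 1 0 * z + R 1 1 = b, R 1 0 * z' + R 1 1 = b' at *
  field_simp
  linear_combination a' * h1 - b' * h0

lemma of_smul {ε : ℂ} (hε : ε ≠ 0) (h : IsMobiusImage (ε • S) z z') : IsMobiusImage S z z' := by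
  unfold IsMobiusImage at h ⊢
  simp only [Matrix.smul_apply, smul_eq_mul] at h
  exact mul_left_cancel₀ hε (by linear_combination h)

lemma cayley_Λh {t : ℝ} (h : IsMobiusImage (Λh t) z z') (hz : 1 - z ≠ 0) (hz' : 1 - z' ≠ 0) :
    (1 + z') / (1 - z') = Real.exp (2 * t) * ((1 + z) / (1 - z)) := by
  have hplus : (Real.cosh t + Real.sinh t : ℂ) = Real.exp t := by
    exact_mod_cast congrArg ofReal (Real.cosh_add_sinh t)
  have hminus : (Real.cosh t - Real.sinh t : ℂ) = Real.exp (-t) := by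
    exact_mod_cast congrArg ofReal (Real.cosh_sub_sinh t)
  have hexp : (Real.exp (2 * t) * Real.exp (-t) : ℂ) = Real.exp t := by
    rw [← ofReal_mul, ← Real.exp_add]; ring_nf
  unfold IsMobiusImage at h
  simp only [Λh, of_apply, cons_val', cons_val_zero, cons_val_one, empty_val',
    cons_val_fin_one] at h
  have key : (Real.exp (-t) : ℂ) * ((1 + z') * (1 - z))
      = Real.exp (-t) * (Real.exp (2 * t) * (1 + z) * (1 - z')) := by
    linear_combination 2 * h - (1 + z') * (1 - z) * hminus - (1 + z) * (1 - z') * hexp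
      + (1 + z) * (1 - z') * hplus
  rw [div_eq_iff hz', mul_div_assoc', div_mul_eq_mul_div, eq_div_iff hz]
  exact mul_left_cancel₀ (ofReal_ne_zero.2 (Real.exp_pos _).ne') key

end IsMobiusImage

lemma norm_deriv_le_of_abs_im_le {F : ℂ → ℂ} {c : ℂ} {r M : ℝ} (hr : 0 < r)
    (hF : DifferentiableOn ℂ F (ball c r)) (hM : ∀ z ∈ ball c r, |(F z).im| ≤ M) :
    ‖deriv F c‖ ≤ 2 * Real.exp (2 * M) / r := by
  -- `exp (I * F)` is bounded above and below, so Cauchy's estimate for it controls `F'`.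
  set q : ℂ → ℂ := fun z => cexp (I * F z)
  have hq_norm : ∀ z, ‖q z‖ = Real.exp (-(F z).im) := by simp [q, norm_exp]
  have hq_le : ∀ z ∈ ball c r, ‖q z‖ ≤ Real.exp M := fun z hz => by
    rw [hq_norm]; exact Real.exp_le_exp.2 ((neg_le_abs _).trans (hM z hz))
  have hc : c ∈ ball c r := mem_ball_self hr
  have hq_ge : Real.exp (-M) ≤ ‖q c‖ := by
    rw [hq_norm]; exact Real.exp_le_exp.2 (neg_le_neg ((le_abs_self _).trans (hM c hc)))
  have hq_deriv : deriv q c = q c * (I * deriv F c) :=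
    ((hF.differentiableAt (isOpen_ball.mem_nhds hc)).hasDerivAt.const_mul I).cexp.deriv
  have hq_maps : Set.MapsTo q (ball c r) (closedBall (q c) (2 * Real.exp M)) := fun z hz => by
    rw [mem_closedBall, dist_eq_norm]
    linarith [norm_sub_le (q z) (q c), hq_le z hz, hq_le c hc]
  have hCauchy : ‖deriv q c‖ ≤ 2 * Real.exp M / r :=
    norm_deriv_le_div_of_mapsTo_ball ((differentiableOn_const I).mul hF).cexp hq_maps hr
  rw [hq_deriv, norm_mul, norm_mul, norm_I, one_mul] at hCauchy
  have hexp : Real.exp (2 * M) = Real.exp M / Real.exp (-M) := by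
    rw [← Real.exp_sub]; ring_nf
  rw [hexp, mul_div_assoc', div_div, le_div_iff₀ (by positivity)]
  calc ‖deriv F c‖ * (Real.exp (-M) * r) ≤ ‖deriv F c‖ * (‖q c‖ * r) := by gcongr
    _ = ‖q c‖ * ‖deriv F c‖ * r := by ring
    _ ≤ 2 * Real.exp M := (le_div_iff₀ hr).1 hCauchy

lemma re_neg_of_mem_ball {w z : ℂ} (hz : z ∈ ball w (-w.re)) : z.re < 0 := by
  have := (abs_re_le_norm (z - w)).trans_lt (mem_ball_iff_norm.1 hz)
  rw [sub_re] at this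
  linarith [le_abs_self (z.re - w.re)]

lemma eq_zero_of_add_eq_add_of_abs_im_le {F : ℂ → ℂ} {c a : ℂ} {M : ℝ} (hc : c.re ≤ 0)
    (hF : ∀ w : ℂ, w.re < 0 → DifferentiableAt ℂ F w)
    (hM : ∀ w : ℂ, w.re < 0 → |(F w).im| ≤ M)
    (hper : ∀ w : ℂ, w.re < 0 → F (w + c) = F w + a) : a = 0 := by
  have hderiv : ∀ w : ℂ, w.re < 0 → ‖deriv F w‖ ≤ 2 * Real.exp (2 * M) / (-w.re) :=
    fun w hw => norm_deriv_le_of_abs_im_le (neg_pos.2 hw)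
      (fun z hz => (hF z (re_neg_of_mem_ball hz)).differentiableWithinAt)
      (fun z hz => hM z (re_neg_of_mem_ball hz))
  have hbound : ∀ r : ℝ, 0 < r → ‖a‖ ≤ 2 * Real.exp (2 * M) * ‖c‖ / r := by
    intro r hr
    have hs : ∀ w ∈ {w : ℂ | w.re ≤ -r}, w.re < 0 := fun w (hw : w.re ≤ -r) => by linarith
    have hmvt := (convex_halfSpace_re_le (-r)).norm_image_sub_le_of_norm_deriv_le
      (fun w hw => hF w (hs w hw))
      (fun w (hw : w.re ≤ -r) => (hderiv w (hs w hw)).trans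
        (div_le_div_of_nonneg_left (by positivity) hr (by linarith)))
      (x := ((-r : ℝ) : ℂ)) (y := ((-r : ℝ) : ℂ) + c) (by simp) (by simp [hc])
    rw [hper _ (by simpa using hr), add_sub_cancel_left, add_sub_cancel_left] at hmvt
    rwa [mul_div_right_comm]
  have hlim : Tendsto (fun r : ℝ => 2 * Real.exp (2 * M) * ‖c‖ / r) atTop (𝓝 0) :=
    tendsto_const_nhds.div_atTop tendsto_id
  exact norm_le_zero_iff.1 (ge_of_tendsto hlim ((eventually_gt_atTop 0).mono hbound))

lemma one_sub_ne_zero_of_norm_lt_one {z : ℂ} (hz : ‖z‖ < 1) : 1 - z ≠ 0 :=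
  sub_ne_zero.2 fun h => by simp [← h] at hz

lemma re_one_add_div_one_sub_pos {z : ℂ} (hz : ‖z‖ < 1) : 0 < ((1 + z) / (1 - z)).re := by
  have hnum : ((1 + z) * conj (1 - z)).re = 1 - normSq z := by
    simp only [mul_re, add_re, add_im, conj_re, conj_im, sub_re, sub_im, one_re, one_im,
      normSq_apply]
    ring
  have hz' : normSq z < 1 := by
    rw [normSq_eq_norm_sq]; nlinarith [norm_nonneg z]
  rw [div_eq_mul_inv, Complex.inv_def, ← mul_assoc, re_mul_ofReal, hnum]
  exact mul_pos (by linarith) (inv_pos.2 (normSq_pos.2 (one_sub_ne_zero_of_norm_lt_one hz)))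

lemma eq_zero_of_isMobiusImage_Λh {h : ℂ → ℂ} {c : ℂ} {t : ℝ} (hc : c.re ≤ 0)
    (hd : ∀ w : ℂ, w.re < 0 → DifferentiableAt ℂ h w) (hlt : ∀ w : ℂ, w.re < 0 → ‖h w‖ < 1)
    (hper : ∀ w : ℂ, w.re < 0 → IsMobiusImage (Λh t) (h w) (h (w + c))) : t = 0 := by
  have hK : ∀ w : ℂ, w.re < 0 → 0 < ((1 + h w) / (1 - h w)).re := fun w hw =>
    re_one_add_div_one_sub_pos (hlt w hw)
  have h2t : 2 * (t : ℂ) = 0 := by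
    refine eq_zero_of_add_eq_add_of_abs_im_le (F := fun w => log ((1 + h w) / (1 - h w)))
      (M := Real.pi / 2) hc (fun w hw => ?_) (fun w hw => ?_) (fun w hw => ?_)
    · exact (differentiableAt_log (Or.inl (hK w hw))).comp w
        (((differentiableAt_const 1).add (hd w hw)).div ((differentiableAt_const 1).sub (hd w hw))
          (one_sub_ne_zero_of_norm_lt_one (hlt w hw)))
    · rw [log_im]
      exact (abs_arg_lt_pi_div_two_iff.2 (Or.inl (hK w hw))).le
    · have hwc : (w + c).re < 0 := by rw [add_re]; linarith
      rw [(hper w hw).cayley_Λh (one_sub_ne_zero_of_norm_lt_one (hlt w hw))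
          (one_sub_ne_zero_of_norm_lt_one (hlt _ hwc)),
        log_ofReal_mul (Real.exp_pos _) (ne_of_apply_ne re (hK w hw).ne'), Real.log_exp]
      push_cast
      ring
  simpa using h2t

lemma norm_lt_of_norm_lt_one {Q : Matrix (Fin 2) (Fin 2) ℂ} (hQ : Qᴴ * e3 * Q = e3) {z : ℂ}
    (hz : ‖z‖ < 1) : ‖Q 0 0 * z + Q 0 1‖ < ‖Q 1 0 * z + Q 1 1‖ := by
  have := normSq_sub_normSq_of_conjTranspose_mul_e3_mul hQ z
  rw [normSq_eq_norm_sq, normSq_eq_norm_sq, normSq_eq_norm_sq] at this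
  nlinarith [norm_nonneg z, norm_nonneg (Q 0 0 * z + Q 0 1), norm_nonneg (Q 1 0 * z + Q 1 1)]

lemma norm_lt_of_one_lt_norm {Q : Matrix (Fin 2) (Fin 2) ℂ} (hQ : Qᴴ * e3 * Q = e3) {z : ℂ}
    (hz : 1 < ‖z‖) : ‖Q 1 0 * z + Q 1 1‖ < ‖Q 0 0 * z + Q 0 1‖ := by
  have := normSq_sub_normSq_of_conjTranspose_mul_e3_mul hQ z
  rw [normSq_eq_norm_sq, normSq_eq_norm_sq, normSq_eq_norm_sq] at this
  nlinarith [norm_nonneg z, norm_nonneg (Q 0 0 * z + Q 0 1), norm_nonneg (Q 1 0 * z + Q 1 1)]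

def swapMatrix : Matrix (Fin 2) (Fin 2) ℂ := !![0, 1; 1, 0]

lemma swapMatrix_mul_Λh (t : ℝ) : swapMatrix * Λh t = Λh t * swapMatrix := by
  ext i j; fin_cases i <;> fin_cases j <;> simp [swapMatrix, Λh]

lemma exists_mul_eq_mul_norm_lt {Q T A : Matrix (Fin 2) (Fin 2) ℂ} (hQ : Qᴴ * e3 * Q = e3)
    (hQT : Q * T = A * Q) (hA : swapMatrix * A = A * swapMatrix) {s : Set ℂ} {f : ℂ → ℂ}
    (hs : IsPreconnected s) (hf : ContinuousOn f s) (hf1 : ∀ x ∈ s, ‖f x‖ ≠ 1) :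
    ∃ R : Matrix (Fin 2) (Fin 2) ℂ, R * T = A * R ∧
      ∀ x ∈ s, ‖R 0 0 * f x + R 0 1‖ < ‖R 1 0 * f x + R 1 1‖ := by
  rcases hs.forall_lt_or_forall_gt hf.norm hf1 with hin | hout
  · exact ⟨Q, hQT, fun x hx => norm_lt_of_norm_lt_one hQ (hin x hx)⟩
  · refine ⟨swapMatrix * Q, ?_, fun x hx => ?_⟩
    · rw [Matrix.mul_assoc, hQT, ← Matrix.mul_assoc, hA, Matrix.mul_assoc]
    · simpa [swapMatrix, Matrix.mul_apply, Fin.sum_univ_two] using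
        norm_lt_of_one_lt_norm hQ (hout x hx)

theorem monodromy_not_hyperbolic_general
    (g : ℂ → ℂ) (T : Matrix (Fin 2) (Fin 2) ℂ)
    (hg : ∀ w : ℂ, w.re < 0 → DifferentiableAt ℂ g w)
    (hg1 : ∀ w : ℂ, w.re < 0 → ‖g w‖ ≠ 1)
    (hmono : ∀ w : ℂ, w.re < 0 →
      (T 1 0 * g w + T 1 1) * g (w + 2 * Real.pi * Complex.I)
        = T 0 0 * g w + T 0 1) :
    ¬ ∃ (P : Matrix (Fin 2) (Fin 2) ℂ) (ε : ℂ) (t : ℝ),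
        SU11 P ∧ (ε = 1 ∨ ε = -1) ∧ 0 < t ∧ P⁻¹ * T * P = ε • Λh t := by
  rintro ⟨P, ε, t, hP, hε, ht, hconj⟩
  have hε0 : ε ≠ 0 := by rcases hε with rfl | rfl <;> norm_num
  have hPT : P⁻¹ * T = (ε • Λh t) * P⁻¹ := by
    rw [← hconj, Matrix.mul_assoc _ P, mul_nonsing_inv _ (by simp [hP.1]), Matrix.mul_one]
  obtain ⟨R, hRT, hR⟩ := exists_mul_eq_mul_norm_lt (conjTranspose_inv_mul_e3_mul_inv hP.2) hPT
    (by rw [Matrix.mul_smul, swapMatrix_mul_Λh, Matrix.smul_mul])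
    (convex_halfSpace_re_lt 0).isPreconnected
    (fun w hw => (hg w hw).continuousAt.continuousWithinAt) hg1
  have hden : ∀ w : ℂ, w.re < 0 → R 1 0 * g w + R 1 1 ≠ 0 := fun w hw =>
    norm_pos_iff.1 ((norm_nonneg _).trans_lt (hR w hw))
  refine ht.ne' (eq_zero_of_isMobiusImage_Λh (h := fun w => mobius R (g w))
    (c := 2 * Real.pi * I) (by simp) (fun w hw => ?_) (fun w hw => ?_) (fun w hw => ?_))
  · exact (((hg w hw).const_mul _).add_const _).div (((hg w hw).const_mul _).add_const _)
      (hden w hw)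
  · rw [mobius, norm_div, div_lt_one (norm_pos_iff.2 (hden w hw))]
    exact hR w hw
  · have hw' : (w + 2 * Real.pi * I).re < 0 := by simpa using hw
    exact (IsMobiusImage.mobius_of_mul_eq_mul hRT (hmono w hw) (hden w hw) (hden _ hw')).of_smul
      hε0

/-- The monodromy of a conformal hyperbolic metric on the punctured disk is
never hyperbolic: if `g` is a developing map on the left half-plane (a
holomorphic function with nonvanishing derivative and `|g| ≠ 1`) whose
monodromy under `w ↦ w + 2πi` is given by `T ∈ SU(1,1)`, then `T` is not
conjugate in `SU(1,1)` to `±Λ_h(t)` with `t > 0`. -/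
theorem monodromy_not_hyperbolic
    (g : ℂ → ℂ) (T : Matrix (Fin 2) (Fin 2) ℂ)
    (hg : ∀ w : ℂ, w.re < 0 → DifferentiableAt ℂ g w)
    (hg' : ∀ w : ℂ, w.re < 0 → deriv g w ≠ 0)
    (hg1 : ∀ w : ℂ, w.re < 0 → ‖g w‖ ≠ 1)
    (hT : SU11 T)
    (hmono : ∀ w : ℂ, w.re < 0 →
      (T 1 0 * g w + T 1 1) * g (w + 2 * Real.pi * Complex.I)
        = T 0 0 * g w + T 0 1) :
    ¬ ∃ (P : Matrix (Fin 2) (Fin 2) ℂ) (ε : ℂ) (t : ℝ),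
        SU11 P ∧ (ε = 1 ∨ ε = -1) ∧ 0 < t ∧ P⁻¹ * T * P = ε • Λh t :=
  monodromy_not_hyperbolic_general g T hg hg1 hmono
end
end

section
/- Let g be a nonconstant holomorphic function on a neighborhood of 0 in ℂ with |g(0)| = 1. Then there exist a positive integer m and δ ∈ ℝ such that for every ε ∈ (0, π/(2m)) there exists r > 0 so that every z with 0 < |z| < r and |g(z)| = 1 lies in S(m, ε, δ). (Core of Lemma E2: if the singular set of a g-regular integral elliptic end accumulates at the end, then near the end it is contained in the union of 2m thin sectors.) -/
/-!
Write `g z = g 0 + z ^ n * h z` with `n ≥ 1` and `h 0 ≠ 0`. Expanding `|g 0 + w|² = |g 0|²` gives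
`Re (conj (g 0) * w) = -|w|² / 2`, so on `{|g| = 1}` we get `Re (c * z ^ n) = o(|z| ^ n)` with
`c = conj (g 0) * h 0`. Since `Re (c * z ^ n) = |c| |z| ^ n cos (arg c + n arg z)`, the cosine tends
to `0`: `n arg z + arg c` is close to `π/2` modulo `π`, i.e. `z` lies in the `2n` thin sectors
around the directions `kπ/n + (π/2 - arg c)/n`.
-/

open Complex Metric

noncomputable section

/-- `z` lies in the union `S(m,ε,δ)` of the `2m` open sectors
`{kπ/m + δ − ε < arg z < kπ/m + δ + ε}` (k ∈ ℤ, i.e. arg taken mod 2π). -/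
def inSectors (m : ℕ) (ε δ : ℝ) (z : ℂ) : Prop :=
  z ≠ 0 ∧ ∃ θ : ℝ, z = (‖z‖ : ℂ) * Complex.exp (θ * Complex.I) ∧
    ∃ k : ℤ, |θ - (k * Real.pi / m + δ)| < ε

open Filter Topology ComplexConjugate
open scoped Real

theorem AnalyticAt.exists_eventuallyEq_add_pow_smul {𝕜 E : Type*} [NontriviallyNormedField 𝕜]
    [NormedAddCommGroup E] [NormedSpace 𝕜 E] {f : 𝕜 → E} {z₀ : 𝕜} (hf : AnalyticAt 𝕜 f z₀)
    (hnc : ¬ ∀ᶠ z in 𝓝 z₀, f z = f z₀) :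
    ∃ n, 0 < n ∧ ∃ h : 𝕜 → E, AnalyticAt 𝕜 h z₀ ∧ h z₀ ≠ 0 ∧
      ∀ᶠ z in 𝓝 z₀, f z = f z₀ + (z - z₀) ^ n • h z := by
  obtain ⟨n, h, han, h0, hev⟩ :=
    (hf.sub (analyticAt_const (v := f z₀))).exists_eventuallyEq_pow_smul_nonzero_iff.mpr
      (by simpa only [Pi.sub_apply, sub_eq_zero] using hnc)
  refine ⟨n, Nat.pos_of_ne_zero fun hn => h0 ?_, h, han, h0,
    hev.mono fun z hz => by rw [← hz, Pi.sub_apply, add_sub_cancel]⟩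
  simpa [hn] using hev.self_of_nhds.symm

theorem Real.exists_int_abs_sub_mul_pi_lt_of_abs_sin_lt {y a : ℝ} (ha₀ : 0 ≤ a) (ha : a ≤ π / 2)
    (h : |Real.sin y| < Real.sin a) : ∃ k : ℤ, |y - k * π| < a := by
  set k := round (y / π)
  have hu : |y - k * π| ≤ π / 2 := by
    have := abs_sub_round (y / π)
    rw [show y - k * π = (y / π - k) * π by field_simp, abs_mul, abs_of_pos Real.pi_pos]
    nlinarith [Real.pi_pos]
  have hsin : |Real.sin (y - k * π)| = |Real.sin y| := by
    rw [Real.sin_sub_int_mul_pi, abs_mul, abs_zpow, abs_neg, abs_one, one_zpow, one_mul]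
  rw [← hsin, abs_lt, ← Real.sin_neg] at h
  rw [abs_le] at hu
  exact ⟨k, abs_lt.mpr ⟨(Real.strictMonoOn_sin.lt_iff_lt ⟨by linarith, by linarith⟩ hu).mp h.1,
    (Real.strictMonoOn_sin.lt_iff_lt hu ⟨by linarith, ha⟩).mp h.2⟩⟩

theorem Complex.re_mul_pow (c z : ℂ) (n : ℕ) :
    (c * z ^ n).re = ‖c‖ * ‖z‖ ^ n * Real.cos (arg c + n * arg z) := by
  have : c * z ^ n = ((‖c‖ * ‖z‖ ^ n : ℝ) : ℂ) * exp ((arg c + n * arg z : ℝ) * I) := by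
    conv_lhs => rw [← norm_mul_exp_arg_mul_I c, ← norm_mul_exp_arg_mul_I z]
    push_cast
    rw [add_mul, exp_add, mul_pow, ← exp_nat_mul]
    ring_nf
  rw [this, re_ofReal_mul, exp_ofReal_mul_I_re]

theorem Complex.re_conj_mul_of_norm_add_eq_norm {a w : ℂ} (h : ‖a + w‖ = ‖a‖) :
    (conj a * w).re = -‖w‖ ^ 2 / 2 := by
  have := normSq_add a w
  rw [normSq_eq_norm_sq, normSq_eq_norm_sq, normSq_eq_norm_sq, h] at this
  rw [← conj_re, map_mul, conj_conj]
  linarith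

theorem Complex.abs_re_conj_mul_mul_le {a u v v₀ : ℂ} (ha : ‖a‖ = 1) (h : ‖a + u * v‖ = 1) :
    |(conj a * v₀ * u).re| ≤ ‖u‖ * (‖v - v₀‖ + ‖u‖ * ‖v‖ ^ 2 / 2) := by
  have hmain : (conj a * (u * v)).re = -‖u * v‖ ^ 2 / 2 :=
    re_conj_mul_of_norm_add_eq_norm (h.trans ha.symm)
  have hrest : |(conj a * u * (v - v₀)).re| ≤ ‖u‖ * ‖v - v₀‖ := by
    simpa [ha] using abs_re_le_norm (conj a * u * (v - v₀))
  calc |(conj a * v₀ * u).re| = |(conj a * (u * v)).re - (conj a * u * (v - v₀)).re| := by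
        rw [← sub_re]; ring_nf
    _ ≤ ‖u * v‖ ^ 2 / 2 + ‖u‖ * ‖v - v₀‖ := by
        rw [hmain]; refine (abs_sub _ _).trans (add_le_add ?_ hrest); rw [abs_div]; simp
    _ = ‖u‖ * (‖v - v₀‖ + ‖u‖ * ‖v‖ ^ 2 / 2) := by rw [norm_mul]; ring

theorem Complex.abs_cos_arg_add_lt {c z : ℂ} {n : ℕ} {s : ℝ}
    (h : |(c * z ^ n).re| < ‖z‖ ^ n * (‖c‖ * s)) : |Real.cos (arg c + n * arg z)| < s := by
  rw [re_mul_pow, abs_mul, abs_of_nonneg (by positivity), mul_comm ‖c‖, mul_assoc] at h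
  exact lt_of_mul_lt_mul_left (lt_of_mul_lt_mul_left h (by positivity)) (norm_nonneg c)

theorem inSectors_of_abs_cos_lt {m : ℕ} {ε φ : ℝ} {z : ℂ} (hm : 0 < m) (hz : z ≠ 0)
    (hε : 0 ≤ ε) (hεm : m * ε ≤ π / 2) (h : |Real.cos (φ + m * arg z)| < Real.sin (m * ε)) :
    inSectors m ε ((π / 2 - φ) / m) z := by
  have hm' : (0 : ℝ) < m := by exact_mod_cast hm
  obtain ⟨k, hk⟩ := Real.exists_int_abs_sub_mul_pi_lt_of_abs_sin_lt (y := φ + m * arg z - π / 2)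
    (by positivity) hεm (by rwa [Real.sin_sub_pi_div_two, abs_neg])
  refine ⟨hz, arg z, (norm_mul_exp_arg_mul_I z).symm, k, ?_⟩
  have : φ + m * arg z - π / 2 - k * π = m * (arg z - (k * π / m + (π / 2 - φ) / m)) := by
    field_simp; ring
  rw [this, abs_mul, abs_of_pos hm'] at hk
  exact lt_of_mul_lt_mul_left hk hm'.le

/-- Core of Lemma E2: if `g` is a nonconstant holomorphic function near `0`
with `|g(0)| = 1`, then there are `m ∈ ℤ₊` and `δ ∈ ℝ` such that for every
`ε ∈ (0, π/(2m))` the set `{|g| = 1}` near `0` is contained in `S(m,ε,δ)`. -/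
theorem integral_elliptic_singular_set_in_sectors
    (g : ℂ → ℂ) (hg : AnalyticAt ℂ g 0)
    (hnc : ¬ ∀ᶠ z in nhds (0 : ℂ), g z = g 0)
    (habs : ‖g 0‖ = 1) :
    ∃ (m : ℕ) (δ : ℝ), 0 < m ∧
      ∀ ε : ℝ, 0 < ε → ε < Real.pi / (2 * m) →
        ∃ r : ℝ, 0 < r ∧ ∀ z : ℂ, 0 < ‖z‖ → ‖z‖ < r → ‖g z‖ = 1 →
          inSectors m ε δ z := by
  obtain ⟨n, hn, h, han, h0, hev⟩ := hg.exists_eventuallyEq_add_pow_smul hnc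
  set c := conj (g 0) * h 0
  have hc : 0 < ‖c‖ := by simp [c, habs, h0]
  refine ⟨n, (π / 2 - arg c) / n, hn, fun ε hε hεn => ?_⟩
  have hnε : n * ε < π / 2 := by
    rw [lt_div_iff₀ (by positivity)] at hεn; linarith
  have hsin : 0 < Real.sin (n * ε) :=
    Real.sin_pos_of_pos_of_lt_pi (by positivity) (by linarith [Real.pi_pos])
  have herr : Tendsto (fun z => ‖h z - h 0‖ + ‖z‖ ^ n * ‖h z‖ ^ 2 / 2) (𝓝 0) (𝓝 0) := by
    have hcont : ContinuousAt (fun z => ‖h z - h 0‖ + ‖z‖ ^ n * ‖h z‖ ^ 2 / 2) 0 := by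
      have := han.continuousAt; fun_prop
    simpa [ContinuousAt, zero_pow hn.ne'] using hcont
  obtain ⟨r, hr, hball⟩ := Metric.eventually_nhds_iff.mp
    (hev.and (herr.eventually_lt_const (mul_pos hc hsin)))
  refine ⟨r, hr, fun z hz0 hzr hz1 => ?_⟩
  obtain ⟨hgz, hsmall⟩ := hball (by simpa using hzr)
  have hz : z ≠ 0 := norm_pos_iff.mp hz0
  refine inSectors_of_abs_cos_lt hn hz hε.le hnε.le (abs_cos_arg_add_lt ?_)
  calc |(c * z ^ n).re| ≤ ‖z ^ n‖ * (‖h z - h 0‖ + ‖z ^ n‖ * ‖h z‖ ^ 2 / 2) :=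
        abs_re_conj_mul_mul_le habs (by simpa [hgz] using hz1)
    _ < ‖z‖ ^ n * (‖c‖ * Real.sin (n * ε)) := by
        rw [norm_pow]; exact mul_lt_mul_of_pos_left hsmall (by positivity)
end
end

section
/- Let m be a positive integer and let φ be holomorphic on a neighborhood of 0 in ℂ with φ(0) ≠ 0; fix r₀ > 0 small enough that φ is holomorphic on {|z| < r₀} and set A = {z : 0 < |z| < r₀, Im(z^{−m}·φ(z)) = log|z|}. Then: (i) 0 is an accumulation point of A, i.e. for every r ∈ (0, r₀) there exists z ∈ A with |z| < r; and (ii) there exists δ ∈ ℝ such that for every ε ∈ (0, π/(2m)) there exists r > 0 with A ∩ {0 < |z| < r} ⊆ S(m, ε, δ). (Core of Lemma P, second kind: the singular set of a g-regular parabolic end of the second kind accumulates at the end and near the end is contained in 2m thin sectors.) -/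
/-!
Write `z = ρ e^{iθ}` and `c = φ 0`. Multiplying the defining equation of the singular set by
`ρ^m` turns it into `‖c‖ sin (arg c - mθ) = ρ^m log ρ - Im ((φ z - c) e^{-imθ})`, and the right
side tends to `0` with `ρ`. Hence near `0` the singular set forces `sin (arg c - mθ) ≈ 0`, i.e.
`θ` is close to `arg c / m + kπ/m`. Conversely, on each small circle the left side takes the
values `±‖c‖` (at `mθ = arg c ∓ π/2`), which dominate the right side, so by the intermediate
value theorem every small circle meets the singular set.
-/

open Complex Metric

noncomputable section

namespace Real

lemma exists_abs_sub_int_mul_pi_lt_of_abs_sin_lt {t ε : ℝ} (hε₀ : 0 < ε) (hε : ε ≤ π / 2)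
    (h : |sin t| < sin ε) : ∃ k : ℤ, |t - k * π| < ε := by
  refine ⟨round (t / π), ?_⟩
  set s := t - round (t / π) * π
  have hs : |s| ≤ π / 2 := by
    have : s = (t / π - round (t / π)) * π := by simp only [s]; field_simp
    rw [this, abs_mul, abs_of_pos pi_pos]
    nlinarith [abs_sub_round (t / π), pi_pos]
  have hsin : |sin s| = |sin t| := by
    rw [sin_sub_int_mul_pi, abs_mul, abs_neg_one_zpow, one_mul]
  by_contra! hεs
  have : sin ε ≤ sin |s| := sin_le_sin_of_le_of_le_pi_div_two (by linarith [pi_pos]) hs hεs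
  rw [← abs_sin_eq_sin_abs_of_abs_le_pi (by linarith [pi_pos]), hsin] at this
  linarith

lemma continuous_pow_mul_log {m : ℕ} (hm : m ≠ 0) : Continuous fun x : ℝ => x ^ m * log x := by
  obtain ⟨n, rfl⟩ := Nat.exists_eq_succ_of_ne_zero hm
  refine ((continuous_pow n).mul continuous_mul_log).congr fun x => ?_
  simp only [Pi.mul_apply, pow_succ]
  ring

end Real

lemma exists_forall_norm_lt_norm_sub_add_norm_pow_mul_abs_log_lt {E F : Type*}
    [NormedAddCommGroup E] [NormedAddCommGroup F] {φ : E → F} (hφ : ContinuousAt φ 0)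
    {m : ℕ} (hm : m ≠ 0) {η : ℝ} (hη : 0 < η) :
    ∃ d > 0, ∀ z : E, ‖z‖ < d → ‖φ z - φ 0‖ + ‖z‖ ^ m * |Real.log ‖z‖| < η := by
  have hlim : ContinuousAt (fun z : E => ‖φ z - φ 0‖ + |‖z‖ ^ m * Real.log ‖z‖|) 0 :=
    (hφ.sub continuousAt_const).norm.add
      ((Real.continuous_pow_mul_log hm).comp continuous_norm).abs.continuousAt
  obtain ⟨d, hd, hball⟩ :=
    Metric.eventually_nhds_iff.1 (hlim.eventually (gt_mem_nhds (by simpa [hm] using hη)))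
  refine ⟨d, hd, fun z hz => ?_⟩
  simpa [abs_mul] using hball (by simpa using hz)

lemma im_mul_exp_ofReal_mul_I (c : ℂ) (t : ℝ) :
    (c * exp (t * I)).im = ‖c‖ * Real.sin (arg c + t) := by
  conv_lhs => rw [← norm_mul_exp_arg_mul_I c, mul_assoc, ← exp_add, ← add_mul]
  rw [← ofReal_add, im_ofReal_mul, exp_ofReal_mul_I_im]

lemma pow_mul_im_div_pow (w : ℂ) {ρ : ℝ} (hρ : ρ ≠ 0) (θ : ℝ) (m : ℕ) :
    ρ ^ m * (w / (ρ * exp (θ * I)) ^ m).im = (w * exp ((-(m * θ) : ℝ) * I)).im := by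
  have : w / (ρ * exp (θ * I)) ^ m = ((ρ ^ m)⁻¹ : ℝ) * (w * exp ((-(m * θ) : ℝ) * I)) := by
    rw [mul_pow, ← exp_nat_mul, ofReal_neg, neg_mul, exp_neg]
    push_cast
    field_simp
  rw [this, im_ofReal_mul, ← mul_assoc, mul_inv_cancel₀ (pow_ne_zero m hρ), one_mul]

lemma abs_pow_mul_im_div_pow_sub_le (w c : ℂ) {ρ : ℝ} (hρ : ρ ≠ 0) (θ : ℝ) (m : ℕ) :
    |ρ ^ m * (w / (ρ * exp (θ * I)) ^ m).im - ‖c‖ * Real.sin (arg c - m * θ)| ≤ ‖w - c‖ := by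
  rw [pow_mul_im_div_pow w hρ, sub_eq_add_neg (arg c), ← im_mul_exp_ofReal_mul_I, ← sub_im,
    ← sub_mul]
  calc _ ≤ ‖(w - c) * exp ((-(m * θ) : ℝ) * I)‖ := abs_im_le_norm _
    _ = ‖w - c‖ := by rw [norm_mul, norm_exp_ofReal_mul_I, mul_one]

lemma exists_norm_eq_im_div_pow_eq {φ : ℂ → ℂ} {c : ℂ} {ρ t : ℝ} {m : ℕ} (hm : m ≠ 0)
    (hρ : 0 < ρ) (hφ : ContinuousOn φ (sphere 0 ρ))
    (hsmall : ∀ z ∈ sphere (0 : ℂ) ρ, ‖φ z - c‖ + ρ ^ m * |t| < ‖c‖) :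
    ∃ z : ℂ, ‖z‖ = ρ ∧ (φ z / z ^ m).im = t := by
  set p : ℝ → ℂ := fun θ => ρ * exp (θ * I)
  have hp : ∀ θ, p θ ∈ sphere (0 : ℂ) ρ := fun θ => by
    simp [p, norm_exp_ofReal_mul_I, abs_of_pos hρ]
  have hcont : Continuous fun θ => (φ (p θ) / p θ ^ m).im := by
    have hpc : Continuous p := by fun_prop
    refine continuous_im.comp ((hφ.comp_continuous hpc hp).div (hpc.pow m) fun θ => ?_)
    exact pow_ne_zero _ (ne_zero_of_mem_sphere hρ.ne' ⟨_, hp θ⟩)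
  have hm' : (m : ℝ) ≠ 0 := Nat.cast_ne_zero.2 hm
  set θhi := (arg c - Real.pi / 2) / m
  set θlo := (arg c + Real.pi / 2) / m
  have hθhi : Real.sin (arg c - m * θhi) = 1 := by
    rw [mul_div_cancel₀ _ hm', sub_sub_cancel, Real.sin_pi_div_two]
  have hθlo : Real.sin (arg c - m * θlo) = -1 := by
    rw [mul_div_cancel₀ _ hm', sub_add_cancel_left, Real.sin_neg, Real.sin_pi_div_two]
  have hρm : 0 < ρ ^ m := pow_pos hρ m
  have hbound : ∀ θ, |ρ ^ m * (φ (p θ) / p θ ^ m).im - ‖c‖ * Real.sin (arg c - m * θ)| ≤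
      ‖φ (p θ) - c‖ := fun θ => abs_pow_mul_im_div_pow_sub_le _ c hρ.ne' θ m
  have ht : |ρ ^ m * t| = ρ ^ m * |t| := by rw [abs_mul, abs_of_pos hρm]
  have hle_hi : t ≤ (φ (p θhi) / p θhi ^ m).im := by
    refine le_of_mul_le_mul_left ?_ hρm
    have := hbound θhi
    rw [hθhi, mul_one] at this
    linarith [(abs_le.1 this).1, le_abs_self (ρ ^ m * t), hsmall _ (hp θhi)]
  have hle_lo : (φ (p θlo) / p θlo ^ m).im ≤ t := by
    refine le_of_mul_le_mul_left ?_ hρm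
    have := hbound θlo
    rw [hθlo, mul_neg_one] at this
    linarith [(abs_le.1 this).2, neg_abs_le (ρ ^ m * t), hsmall _ (hp θlo)]
  obtain ⟨θ, -, hθ⟩ := intermediate_value_uIcc hcont.continuousOn
    (Set.mem_uIcc.2 (Or.inr ⟨hle_lo, hle_hi⟩))
  exact ⟨p θ, mem_sphere_zero_iff_norm.1 (hp θ), hθ⟩

lemma norm_mul_abs_sin_arg_sub_le {w c z : ℂ} {t : ℝ} {m : ℕ} (hz : z ≠ 0)
    (h : (w / z ^ m).im = t) :
    ‖c‖ * |Real.sin (arg c - m * arg z)| ≤ ‖w - c‖ + ‖z‖ ^ m * |t| := by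
  have key := abs_pow_mul_im_div_pow_sub_le w c (norm_ne_zero_iff.2 hz) (arg z) m
  rw [norm_mul_exp_arg_mul_I, h] at key
  have := abs_sub_abs_le_abs_sub (‖c‖ * Real.sin (arg c - m * arg z)) (‖z‖ ^ m * t)
  rw [abs_sub_comm, abs_mul, abs_mul, abs_norm, abs_pow, abs_norm] at this
  linarith

lemma inSectors_of_abs_sin_arg_sub_lt {m : ℕ} (hm : 0 < m) {z : ℂ} (hz : z ≠ 0) {α ε : ℝ}
    (hε₀ : 0 < ε) (hε : ε ≤ Real.pi / 2) (h : |Real.sin (α - m * arg z)| < Real.sin ε) :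
    inSectors m ε (α / m) z := by
  obtain ⟨k, hk⟩ := Real.exists_abs_sub_int_mul_pi_lt_of_abs_sin_lt hε₀ hε h
  refine ⟨hz, arg z, (norm_mul_exp_arg_mul_I z).symm, -k, ?_⟩
  have hm' : (0 : ℝ) < m := Nat.cast_pos.2 hm
  have : arg z - ((-k : ℤ) * Real.pi / m + α / m) = -((α - m * arg z - k * Real.pi) / m) := by
    push_cast
    field_simp
    ring
  rw [this, abs_neg, abs_div, abs_of_pos hm', div_lt_iff₀ hm']
  nlinarith [(Nat.one_le_cast (α := ℝ)).2 hm]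

/-- Core of Lemma P (second kind): for `m ∈ ℤ₊` and `φ` holomorphic on
`{|z| < r₀}` with `φ(0) ≠ 0`, the set
`A = {0 < |z| < r₀ : Im(z^{-m} φ(z)) = log |z|}` accumulates at `0`, and
there is `δ` such that for every `ε ∈ (0, π/(2m))`, `A` near `0` is contained
in `S(m,ε,δ)`. -/
theorem parabolic_second_kind_singular_set
    (m : ℕ) (hm : 0 < m) (φ : ℂ → ℂ) (r₀ : ℝ) (hr₀ : 0 < r₀)
    (hφ : DifferentiableOn ℂ φ (ball (0 : ℂ) r₀)) (hφ0 : φ 0 ≠ 0) :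
    (∀ r : ℝ, 0 < r → r < r₀ →
      ∃ z : ℂ, 0 < ‖z‖ ∧ ‖z‖ < r₀ ∧ (φ z / z ^ m).im = Real.log ‖z‖ ∧
        ‖z‖ < r) ∧
    ∃ δ : ℝ, ∀ ε : ℝ, 0 < ε → ε < Real.pi / (2 * m) →
      ∃ r : ℝ, 0 < r ∧ ∀ z : ℂ, 0 < ‖z‖ → ‖z‖ < r₀ →
        (φ z / z ^ m).im = Real.log ‖z‖ → ‖z‖ < r → inSectors m ε δ z := by
  have hφc : ContinuousAt φ 0 := hφ.continuousOn.continuousAt (ball_mem_nhds 0 hr₀)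
  have hc : 0 < ‖φ 0‖ := norm_pos_iff.2 hφ0
  refine ⟨fun r hr hrr₀ => ?_, arg (φ 0) / m, fun ε hε hεm => ?_⟩
  · obtain ⟨d, hd, hsmall⟩ :=
      exists_forall_norm_lt_norm_sub_add_norm_pow_mul_abs_log_lt hφc hm.ne' hc
    obtain ⟨ρ, hρ, hρrd⟩ := exists_between (lt_min hr hd)
    have hρr : ρ < r := hρrd.trans_le (min_le_left _ _)
    obtain ⟨z, rfl, hz⟩ := exists_norm_eq_im_div_pow_eq hm.ne' hρ
      (hφ.continuousOn.mono (sphere_subset_ball (hρr.trans hrr₀)))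
      fun z hz => by
        simpa [mem_sphere_zero_iff_norm.1 hz] using
          hsmall z ((mem_sphere_zero_iff_norm.1 hz).trans_lt (hρrd.trans_le (min_le_right _ _)))
    exact ⟨z, hρ, hρr.trans hrr₀, hz, hρr⟩
  · have hε₂ : ε ≤ Real.pi / 2 := hεm.le.trans
      (div_le_div_of_nonneg_left Real.pi_pos.le two_pos (by norm_cast; omega))
    obtain ⟨d, hd, hsmall⟩ := exists_forall_norm_lt_norm_sub_add_norm_pow_mul_abs_log_lt hφc
      hm.ne' (mul_pos hc (Real.sin_pos_of_pos_of_lt_pi hε (by linarith [Real.pi_pos])))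
    refine ⟨d, hd, fun z hz _ heq hzd => ?_⟩
    refine inSectors_of_abs_sin_arg_sub_lt hm (norm_pos_iff.1 hz) hε hε₂
      (lt_of_mul_lt_mul_left ?_ hc.le)
    exact (norm_mul_abs_sin_arg_sub_le (norm_pos_iff.1 hz) heq).trans_lt (hsmall z hzd)
end
end

section
/- Let m ∈ ℤ, μ ∈ ℝ∖{0}, and let φ be holomorphic on the open unit disk with φ(0) ≠ 0. Then for every y₀ ∈ ℝ there exists a sequence of points wₙ = xₙ + i·y₀ with xₙ → −∞ (xₙ < 0) such that Im( e^{(m+iμ)·wₙ} · φ(e^{wₙ}) ) = 0 for every n. (Core of Lemma H: at a g-regular hyperbolic end of a CMC-1 face, whose modified secondary Gauss map is ĝ(w) = e^{(m+iμ)w}φ(e^w) on the universal cover of the punctured disk, every ray emanating from the puncture meets the singular set {Im ĝ = 0} infinitely many times.) -/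
/-!
Along the line `x + i y₀` the function `e^{(m+iμ)w} φ(e^w)` is the positive factor
`e^{m x - μ y₀}` times `e^{i(μ x + m y₀)} ψ(x)`, where `ψ(x) = φ(e^{x + i y₀}) → φ(0) ≠ 0` as
`x → -∞`. Since `μ ≠ 0`, the rotation `e^{i(μ x + m y₀)}` is periodic in `x` and turns `φ(0)` onto
both the positive and the negative imaginary axis once per period, so the imaginary part changes
sign on every period far enough to the left, and the intermediate value theorem gives the zeros.
-/

open Complex Metric Filter Topology Set

lemma frequently_atBot_eq_zero_of_tendsto_atBot {ι : Type*} {l : Filter ι} [l.NeBot]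
    {f : ℝ → ℝ} {r : ℝ} (hf : ContinuousOn f (Iio r)) {s t : ι → ℝ}
    (hs : Tendsto s l atBot) (ht : Tendsto t l atBot)
    (hfs : ∀ᶠ i in l, 0 < f (s i)) (hft : ∀ᶠ i in l, f (t i) < 0) :
    ∃ᶠ x in atBot, f x = 0 := by
  refine frequently_atBot.2 fun M => ?_
  obtain ⟨i, hsi, hti, hpos, hneg⟩ := ((hs.eventually (eventually_lt_atBot (min M r))).and
    ((ht.eventually (eventually_lt_atBot (min M r))).and (hfs.and hft))).exists
  have hsub : uIcc (s i) (t i) ⊆ Iio (min M r) := ordConnected_Iio.uIcc_subset hsi hti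
  obtain ⟨x, hx, hfx⟩ := intermediate_value_uIcc
    (hf.mono (hsub.trans (Iio_subset_Iio (min_le_right M r))))
    (mem_uIcc.2 (.inr ⟨hneg.le, hpos.le⟩))
  exact ⟨x, (hsub hx).le.trans (min_le_left M r), hfx⟩

lemma Complex.im_exp_ofReal_mul_I_mul (θ : ℝ) (c : ℂ) :
    (exp (θ * I) * c).im = ‖c‖ * Real.sin (θ + arg c) := by
  conv_lhs => rw [← norm_mul_exp_arg_mul_I c, mul_left_comm, ← exp_add, ← add_mul, ← ofReal_add,
    im_ofReal_mul, exp_ofReal_mul_I_im]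

lemma Complex.im_exp_mul_mul (m μ x y : ℝ) (z : ℂ) :
    (exp ((m + μ * I) * (x + y * I)) * z).im =
      Real.exp (m * x - μ * y) * (exp ((μ * x + m * y : ℝ) * I) * z).im := by
  have : (m + μ * I) * (x + y * I) = ((m * x - μ * y : ℝ) : ℂ) + (μ * x + m * y : ℝ) * I := by
    push_cast; ring_nf; rw [I_sq]; ring
  rw [this, exp_add, ← ofReal_exp, mul_assoc, im_ofReal_mul]

lemma periodic_exp_ofReal_mul_add_mul_I {μ : ℝ} (hμ : μ ≠ 0) (β : ℝ) :
    Function.Periodic (fun x : ℝ => exp ((μ * x + β : ℝ) * I)) |2 * Real.pi / μ| := by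
  have h : Function.Periodic (fun x : ℝ => exp ((μ * x + β : ℝ) * I)) (2 * Real.pi / μ) := by
    intro x
    have : ((μ * (x + 2 * Real.pi / μ) + β : ℝ) : ℂ) * I =
        (μ * x + β : ℝ) * I + 2 * Real.pi * I := by
      have hμ' : (μ : ℂ) ≠ 0 := ofReal_ne_zero.2 hμ
      push_cast; field_simp; ring
    simp only [this, exp_periodic _]
  rcases abs_choice (2 * Real.pi / μ) with habs | habs <;> rw [habs]
  exacts [h, h.neg]

lemma tendsto_sub_natCast_mul_atBot (a : ℝ) {P : ℝ} (hP : 0 < P) :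
    Tendsto (fun n : ℕ => a - n * P) atTop atBot := by
  simpa [sub_eq_add_neg] using tendsto_atBot_add_const_left atTop a
    (tendsto_neg_atTop_atBot.comp (tendsto_natCast_atTop_atTop.atTop_mul_const hP))

lemma frequently_atBot_im_exp_mul_eq_zero {μ : ℝ} (hμ : μ ≠ 0) (β : ℝ) {ψ : ℝ → ℂ} {r : ℝ}
    {c : ℂ} (hψ : ContinuousOn ψ (Iio r)) (hψc : Tendsto ψ atBot (𝓝 c)) (hc : c ≠ 0) :
    ∃ᶠ x in atBot, (exp ((μ * x + β : ℝ) * I) * ψ x).im = 0 := by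
  set P := |2 * Real.pi / μ|
  have hP : 0 < P := abs_pos.2 (div_ne_zero (by positivity) hμ)
  have hu (x : ℝ) (n : ℕ) : exp ((μ * (x - n * P) + β : ℝ) * I) = exp ((μ * x + β : ℝ) * I) :=
    (periodic_exp_ofReal_mul_add_mul_I hμ β).sub_nat_mul_eq n
  have hseq (θ : ℝ) : Tendsto (fun n : ℕ => (θ - β) / μ - n * P) atTop atBot :=
    tendsto_sub_natCast_mul_atBot _ hP
  have hlim (θ : ℝ) : Tendsto (fun n : ℕ => (exp ((μ * ((θ - β) / μ - n * P) + β : ℝ) * I) *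
      ψ ((θ - β) / μ - n * P)).im) atTop (𝓝 (‖c‖ * Real.sin (θ + arg c))) := by
    have hθ : μ * ((θ - β) / μ) + β = θ := by field_simp; ring
    simp only [hu, hθ, ← im_exp_ofReal_mul_I_mul]
    exact ((continuous_im.comp (continuous_const_mul _)).tendsto c).comp (hψc.comp (hseq θ))
  have hcont : ContinuousOn (fun x : ℝ => (exp ((μ * x + β : ℝ) * I) * ψ x).im) (Iio r) :=
    continuous_im.comp_continuousOn ((by fun_prop : Continuous fun x : ℝ =>
      exp ((μ * x + β : ℝ) * I)).continuousOn.mul hψ)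
  have hnorm : 0 < ‖c‖ := norm_pos_iff.2 hc
  -- at `θ = ±π/2 - arg c` the limits are `±‖c‖`
  refine frequently_atBot_eq_zero_of_tendsto_atBot hcont (hseq (Real.pi / 2 - arg c))
    (hseq (-(Real.pi / 2) - arg c)) ((hlim _).eventually_const_lt ?_)
    ((hlim _).eventually_lt_const ?_)
  · simpa using hnorm
  · simpa using hnorm

lemma Complex.norm_exp_ofReal_add_mul_I (x y : ℝ) : ‖exp (x + y * I)‖ = Real.exp x := by
  rw [norm_exp]; simp

lemma tendsto_exp_ofReal_add_mul_I_atBot (y : ℝ) :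
    Tendsto (fun x : ℝ => exp (x + y * I)) atBot (𝓝 0) := by
  rw [tendsto_zero_iff_norm_tendsto_zero]
  simpa only [norm_exp_ofReal_add_mul_I] using Real.tendsto_exp_atBot

/-- Core of Lemma H: for `m ∈ ℤ`, `μ ∈ ℝ ∖ {0}` and `φ` holomorphic on the
unit disk with `φ(0) ≠ 0`, every horizontal line `{x + i y₀ : x < 0}` in the
left half-plane contains a sequence of points going to `Re = −∞` on which
`Im(e^{(m+iμ)w} φ(e^w)) = 0`; i.e. every ray emanating from the puncture
meets the singular set of a `g`-regular hyperbolic end infinitely often. -/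
theorem hyperbolic_end_singular_set_meets_rays
    (m : ℤ) (μ : ℝ) (hμ : μ ≠ 0) (φ : ℂ → ℂ)
    (hφ : DifferentiableOn ℂ φ (ball (0 : ℂ) 1)) (hφ0 : φ 0 ≠ 0) :
    ∀ y₀ : ℝ, ∃ x : ℕ → ℝ, (∀ n, x n < 0) ∧
      Tendsto x atTop atBot ∧
      ∀ n : ℕ,
        (Complex.exp (((m : ℂ) + (μ : ℂ) * Complex.I) *
            ((x n : ℂ) + (y₀ : ℂ) * Complex.I)) *
          φ (Complex.exp ((x n : ℂ) + (y₀ : ℂ) * Complex.I))).im = 0 := by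
  intro y₀
  set ψ : ℝ → ℂ := fun x => φ (exp (x + y₀ * I))
  have hψ : ContinuousOn ψ (Iio 0) :=
    hφ.continuousOn.comp (by fun_prop : Continuous fun x : ℝ => exp (x + y₀ * I)).continuousOn
      fun x hx => by simpa [norm_exp_ofReal_add_mul_I] using hx
  have hψ0 : Tendsto ψ atBot (𝓝 (φ 0)) :=
    (hφ.continuousOn.continuousAt (ball_mem_nhds 0 one_pos)).tendsto.comp
      (tendsto_exp_ofReal_add_mul_I_atBot y₀)
  obtain ⟨x, hx, hzero⟩ := exists_seq_forall_of_frequently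
    ((frequently_atBot_im_exp_mul_eq_zero hμ (m * y₀) hψ hψ0 hφ0).and_eventually
      (eventually_lt_atBot 0))
  refine ⟨x, fun n => (hzero n).2, hx, fun n => ?_⟩
  rw [← ofReal_intCast, im_exp_mul_mul, (hzero n).1, mul_zero]
end

section
/- Every A ∈ SU(1,1) is conjugate within SU(1,1) to a matrix of one of the following forms: (1) Λ_e(s) for some s ∈ (−π, π]; (2) ε·Λ_p(t) for some ε ∈ {1,−1} and t ∈ ℝ∖{0}; or (3) ε·Λ_h(t) for some ε ∈ {1,−1} and t > 0. That is, there exists P ∈ SU(1,1) such that P⁻¹AP is one of these matrices. -/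
open Complex Matrix

noncomputable section

/-- `Λ_e(t) = [[e^{it},0],[0,e^{-it}]]`. -/
def Λe (t : ℝ) : Matrix (Fin 2) (Fin 2) ℂ :=
  !![Complex.exp (Complex.I * t), 0; 0, Complex.exp (-(Complex.I * t))]

/-- `Λ_p(t) = [[1+it,−it],[it,1−it]]`. -/
def Λp (t : ℝ) : Matrix (Fin 2) (Fin 2) ℂ :=
  !![1 + Complex.I * t, -(Complex.I * t); Complex.I * t, 1 - Complex.I * t]

/-!
Every element of `SU(1,1)` is `[[a, b], [b̄, ā]]` with `|a|² - |b|² = 1`. Conjugating by `Λ_e(u)`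
multiplies `b` by `e^{-2iu}`; when `b ∈ iℝ`, conjugating by `Λ_h(u)` fixes `Re a` and acts on
`(Im a, Im b)` as a Lorentz boost of rapidity `2u`. So after rotating `b` onto `i·|b|`, the vector
`(Im a, |b|)` is timelike, lightlike or spacelike. A timelike vector is boosted to `b = 0`, giving
`Λ_e`; a spacelike one is boosted to `Im a = 0`, and a further rotation makes `b` real, giving
`±Λ_h`; a nonzero lightlike one is already `±Λ_p` after the rotation. Since conjugation preserves
`|a|² - |b|² = 1`, the boosted entries never have to be computed beyond the one that vanishes.
-/

open ComplexConjugate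

def su11Matrix (a b : ℂ) : Matrix (Fin 2) (Fin 2) ℂ :=
  !![a, b; conj b, conj a]

theorem su11Matrix_mul (a b c d : ℂ) :
    su11Matrix a b * su11Matrix c d = su11Matrix (a * c + b * conj d) (a * d + b * conj c) := by
  ext i j; fin_cases i <;> fin_cases j <;> simp [su11Matrix] <;> ring

theorem det_su11Matrix (a b : ℂ) : (su11Matrix a b).det = normSq a - normSq b := by
  simp [su11Matrix, det_fin_two_of, mul_conj]

theorem su11Matrix_mul_e3_mul_conjTranspose (a b : ℂ) :
    su11Matrix a b * e3 * (su11Matrix a b)ᴴ = (su11Matrix a b).det • e3 := by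
  ext i j; fin_cases i <;> fin_cases j <;>
    simp [su11Matrix, e3, det_fin_two_of, Matrix.mul_apply, Fin.sum_univ_two] <;> ring

theorem SU11.of_normSq_sub_normSq {a b : ℂ} (h : normSq a - normSq b = 1) :
    SU11 (su11Matrix a b) := by
  have hdet : (su11Matrix a b).det = 1 := by rw [det_su11Matrix]; exact_mod_cast h
  exact ⟨hdet, by rw [su11Matrix_mul_e3_mul_conjTranspose, hdet, one_smul]⟩

theorem SU11.exists_eq_su11Matrix {A : Matrix (Fin 2) (Fin 2) ℂ} (hA : SU11 A) :
    ∃ a b, normSq a - normSq b = 1 ∧ A = su11Matrix a b := by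
  have he3 : e3 * e3 = 1 := by simp [e3, one_fin_two]
  have hinv : A⁻¹ = e3 * Aᴴ * e3 :=
    inv_eq_right_inv (by rw [← Matrix.mul_assoc, ← Matrix.mul_assoc, hA.2, he3])
  have hadj : e3 * Aᴴ * e3 = adjugate A := by
    rw [← hinv, Matrix.inv_def, hA.1]; simp
  have h00 : conj (A 0 0) = A 1 1 := by
    simpa [e3, adjugate_fin_two, vecMul, dotProduct, Matrix.mul_apply, Fin.sum_univ_two]
      using congrFun₂ hadj 0 0
  have h10 : conj (A 0 1) = A 1 0 := by
    simpa [e3, adjugate_fin_two, vecMul, dotProduct, Matrix.mul_apply, Fin.sum_univ_two]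
      using congrFun₂ hadj 1 0
  have hA_eq : A = su11Matrix (A 0 0) (A 0 1) := by
    ext i j; fin_cases i <;> fin_cases j <;> simp [su11Matrix, h00, h10]
  refine ⟨A 0 0, A 0 1, ?_, hA_eq⟩
  have := hA.1
  rw [hA_eq, det_su11Matrix] at this
  exact_mod_cast this

theorem SU11.mul {P Q : Matrix (Fin 2) (Fin 2) ℂ} (hP : SU11 P) (hQ : SU11 Q) : SU11 (P * Q) := by
  refine ⟨by rw [det_mul, hP.1, hQ.1, one_mul], ?_⟩
  calc P * Q * e3 * (P * Q)ᴴ = P * (Q * e3 * Qᴴ) * Pᴴ := by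
        simp only [conjTranspose_mul, Matrix.mul_assoc]
    _ = e3 := by rw [hQ.2, hP.2]

theorem conj_exp_I_mul_ofReal (u : ℝ) : conj (exp (I * u)) = exp (-(I * u)) := by
  rw [← exp_conj]; simp

theorem Λe_eq_su11Matrix (u : ℝ) : Λe u = su11Matrix (exp (I * u)) 0 := by
  ext i j; fin_cases i <;> fin_cases j <;> simp [Λe, su11Matrix, conj_exp_I_mul_ofReal]

theorem Λh_eq_su11Matrix (u : ℝ) : Λh u = su11Matrix (Real.cosh u) (Real.sinh u) := by
  ext i j; fin_cases i <;> fin_cases j <;> simp [Λh, su11Matrix, ← sinh_conj, ← cosh_conj]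

theorem SU11.Λe (u : ℝ) : SU11 (Λe u) := by
  rw [Λe_eq_su11Matrix]
  refine .of_normSq_sub_normSq ?_
  rw [mul_comm, normSq_eq_norm_sq, norm_exp_ofReal_mul_I]; simp

theorem SU11.Λh (u : ℝ) : SU11 (Λh u) := by
  rw [Λh_eq_su11Matrix]
  refine .of_normSq_sub_normSq ?_
  rw [normSq_ofReal, normSq_ofReal]; nlinarith [Real.cosh_sq_sub_sinh_sq u]

def IsSU11Conj (A M : Matrix (Fin 2) (Fin 2) ℂ) : Prop :=
  ∃ P, SU11 P ∧ P⁻¹ * A * P = M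

theorem IsSU11Conj.refl (A : Matrix (Fin 2) (Fin 2) ℂ) : IsSU11Conj A A :=
  ⟨1, ⟨det_one, by simp⟩, by simp⟩

theorem IsSU11Conj.of_mul_eq {A M P : Matrix (Fin 2) (Fin 2) ℂ} (hP : SU11 P)
    (h : A * P = P * M) : IsSU11Conj A M :=
  ⟨P, hP, by rw [Matrix.mul_assoc, h, nonsing_inv_mul_cancel_left (A := P) M (by simp [hP.1])]⟩

theorem IsSU11Conj.trans {A M N : Matrix (Fin 2) (Fin 2) ℂ} (hAM : IsSU11Conj A M)
    (hMN : IsSU11Conj M N) : IsSU11Conj A N := by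
  obtain ⟨P, hP, rfl⟩ := hAM
  obtain ⟨Q, hQ, rfl⟩ := hMN
  exact ⟨P * Q, hP.mul hQ, by simp only [Matrix.mul_inv_rev, Matrix.mul_assoc]⟩

theorem IsSU11Conj.det_eq {A M : Matrix (Fin 2) (Fin 2) ℂ} (h : IsSU11Conj A M) :
    M.det = A.det := by
  obtain ⟨P, hP, rfl⟩ := h
  simp [det_mul, det_nonsing_inv, hP.1]

theorem su11Matrix_mul_Λe (a b : ℂ) (u : ℝ) :
    su11Matrix a b * Λe u = Λe u * su11Matrix a (exp (-(2 * u * I)) * b) := by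
  rw [Λe_eq_su11Matrix, su11Matrix_mul, su11Matrix_mul, conj_exp_I_mul_ofReal, map_zero, mul_zero,
    zero_mul, add_zero, add_zero, ← mul_assoc, ← exp_add]
  congr 1
  · ring
  · ring_nf

theorem isSU11Conj_su11Matrix_of_norm_eq (a : ℂ) {b w : ℂ} (h : ‖b‖ = ‖w‖) :
    IsSU11Conj (su11Matrix a b) (su11Matrix a w) := by
  rcases eq_or_ne b 0 with rfl | hb
  · rw [norm_zero, eq_comm, norm_eq_zero] at h
    rw [h]; exact .refl _
  obtain ⟨θ, hθ⟩ := (norm_eq_one_iff (w / b)).1 <| by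
    rw [norm_div, h, div_self (h ▸ norm_ne_zero_iff.2 hb)]
  refine .of_mul_eq (SU11.Λe (-θ / 2)) ?_
  rw [su11Matrix_mul_Λe]
  push_cast
  rw [show -(2 * (-θ / 2 : ℂ) * I) = θ * I by ring, hθ, div_mul_cancel₀ _ hb]

theorem isSU11Conj_su11Matrix_norm_mul_I (a b : ℂ) :
    IsSU11Conj (su11Matrix a b) (su11Matrix (a.re + a.im * I) (‖b‖ * I)) := by
  rw [re_add_im]
  exact isSU11Conj_su11Matrix_of_norm_eq a (by simp)

theorem su11Matrix_mul_Λh (α β r u : ℝ) :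
    su11Matrix (α + β * I) (r * I) * Λh u =
      Λh u * su11Matrix (α + (β * Real.cosh (2 * u) + r * Real.sinh (2 * u)) * I)
        ((r * Real.cosh (2 * u) + β * Real.sinh (2 * u)) * I) := by
  have h := Real.cosh_sq_sub_sinh_sq u
  rw [Λh_eq_su11Matrix, su11Matrix_mul, su11Matrix_mul, Real.cosh_two_mul, Real.sinh_two_mul]
  generalize Real.cosh u = c at h ⊢
  generalize Real.sinh u = s at h ⊢
  have hC : (c : ℂ) ^ 2 - (s : ℂ) ^ 2 = 1 := by exact_mod_cast h
  simp only [map_add, map_mul, conj_ofReal, conj_I]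
  push_cast
  congr 1
  · linear_combination -(I * (β * c + r * s)) * hC
  · linear_combination -(I * (r * c + β * s)) * hC

theorem isSU11Conj_boost (α β r : ℝ) {v : ℝ} (hv : v ∈ Set.Ioo (-1) 1) :
    IsSU11Conj (su11Matrix (α + β * I) (r * I))
      (su11Matrix (α + ((β - v * r) / √(1 - v ^ 2) : ℝ) * I)
        (((r - v * β) / √(1 - v ^ 2) : ℝ) * I)) := by
  refine .of_mul_eq (SU11.Λh (-Real.artanh v / 2)) ?_
  rw [su11Matrix_mul_Λh, mul_div_cancel₀ _ two_ne_zero, Real.cosh_neg, Real.sinh_neg,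
    Real.cosh_artanh hv, Real.sinh_artanh hv]
  push_cast
  ring_nf

theorem su11Matrix_eq_Λe_arg {z : ℂ} (hz : normSq z = 1) : su11Matrix z 0 = Λe (arg z) := by
  have hz' : ‖z‖ = 1 := by
    rw [← pow_eq_one_iff_of_nonneg (norm_nonneg z) two_ne_zero, ← normSq_eq_norm_sq, hz]
  have := norm_mul_exp_arg_mul_I z
  rw [hz', ofReal_one, one_mul] at this
  rw [Λe_eq_su11Matrix, mul_comm, this]

theorem su11Matrix_eq_smul_Λp {α : ℝ} (hα : α ^ 2 = 1) (β : ℝ) :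
    su11Matrix (α + β * I) (-(β * I)) = (α : ℂ) • Λp (α * β) := by
  have hα' : (α : ℂ) ^ 2 = 1 := by exact_mod_cast hα
  ext i j; fin_cases i <;> fin_cases j <;> simp [su11Matrix, Λp, conj_ofReal] <;>
    first | linear_combination (β * I) * hα' | linear_combination -(β * I) * hα'

theorem su11Matrix_eq_smul_Λh (ε t : ℝ) :
    su11Matrix (ε * Real.cosh t) (ε * Real.sinh t) = (ε : ℂ) • Λh t := by
  rw [Λh_eq_su11Matrix]
  ext i j; fin_cases i <;> fin_cases j <;> simp [su11Matrix, conj_ofReal]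

theorem exists_isSU11Conj_Λe {a b : ℂ} (hab : normSq a - normSq b = 1)
    (h : ‖b‖ < |a.im| ∨ b = 0) :
    ∃ s, -Real.pi < s ∧ s ≤ Real.pi ∧ IsSU11Conj (su11Matrix a b) (Λe s) := by
  obtain ⟨z, hconj⟩ : ∃ z, IsSU11Conj (su11Matrix a b) (su11Matrix z 0) := by
    rcases h with h | rfl
    · have hβ : a.im ≠ 0 := abs_pos.1 ((norm_nonneg b).trans_lt h)
      have hv : ‖b‖ / a.im ∈ Set.Ioo (-1) 1 := by
        rw [Set.mem_Ioo, ← abs_lt, abs_div, abs_norm, div_lt_one (abs_pos.2 hβ)]; exact h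
      have := (isSU11Conj_su11Matrix_norm_mul_I a b).trans (isSU11Conj_boost a.re a.im ‖b‖ hv)
      rw [div_mul_cancel₀ _ hβ, sub_self, zero_div, ofReal_zero, zero_mul] at this
      exact ⟨_, this⟩
    · exact ⟨a, .refl _⟩
  have hz : normSq z = 1 := by
    have := hconj.det_eq
    rwa [det_su11Matrix, det_su11Matrix, map_zero, ← ofReal_sub, ← ofReal_sub, ofReal_inj, hab,
      sub_zero] at this
  exact ⟨arg z, neg_pi_lt_arg z, arg_le_pi z, su11Matrix_eq_Λe_arg hz ▸ hconj⟩

theorem exists_isSU11Conj_smul_Λp {a b : ℂ} (hab : normSq a - normSq b = 1) (h : ‖b‖ = |a.im|)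
    (hb : b ≠ 0) :
    ∃ (ε : ℂ) (t : ℝ), (ε = 1 ∨ ε = -1) ∧ t ≠ 0 ∧ IsSU11Conj (su11Matrix a b) (ε • Λp t) := by
  have hβ : a.im ≠ 0 := abs_ne_zero.1 (h ▸ norm_ne_zero_iff.2 hb)
  have hα : a.re ^ 2 = 1 := by
    rw [normSq_apply, normSq_eq_norm_sq, h, sq_abs] at hab; linear_combination hab
  refine ⟨a.re, a.re * a.im, ?_, mul_ne_zero (by rintro h0; simp [h0] at hα) hβ, ?_⟩
  · rcases sq_eq_one_iff.1 hα with h1 | h1 <;> simp [h1]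
  · rw [← su11Matrix_eq_smul_Λp hα]
    conv_lhs => rw [← re_add_im a]
    exact isSU11Conj_su11Matrix_of_norm_eq _ (by simpa using h)

theorem exists_isSU11Conj_smul_Λh_of_sq_sub_sq {α ρ : ℝ} (h : α ^ 2 - ρ ^ 2 = 1) (hρ : ρ ≠ 0) :
    ∃ (ε : ℂ) (t : ℝ), (ε = 1 ∨ ε = -1) ∧ 0 < t ∧ IsSU11Conj (su11Matrix α (ρ * I)) (ε • Λh t) := by
  obtain ⟨ε, hε, hεα⟩ : ∃ ε : ℝ, (ε = 1 ∨ ε = -1) ∧ ε * |α| = α := by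
    rcases abs_choice α with hα | hα
    · exact ⟨1, .inl rfl, by rw [hα, one_mul]⟩
    · exact ⟨-1, .inr rfl, by rw [hα, neg_one_mul, neg_neg]⟩
  have hcosh : Real.cosh (Real.arsinh |ρ|) = |α| := by
    rw [Real.cosh_arsinh, sq_abs, ← Real.sqrt_sq_eq_abs]; congr 1; linarith
  refine ⟨ε, Real.arsinh |ρ|, by rcases hε with rfl | rfl <;> simp,
    Real.arsinh_pos_iff.2 (abs_pos.2 hρ), ?_⟩
  rw [← su11Matrix_eq_smul_Λh, hcosh, Real.sinh_arsinh, ← ofReal_mul, hεα]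
  refine isSU11Conj_su11Matrix_of_norm_eq _ ?_
  rcases hε with rfl | rfl <;> simp

theorem exists_isSU11Conj_smul_Λh {a b : ℂ} (hab : normSq a - normSq b = 1) (h : |a.im| < ‖b‖) :
    ∃ (ε : ℂ) (t : ℝ), (ε = 1 ∨ ε = -1) ∧ 0 < t ∧ IsSU11Conj (su11Matrix a b) (ε • Λh t) := by
  have hr : 0 < ‖b‖ := (abs_nonneg _).trans_lt h
  have hv : a.im / ‖b‖ ∈ Set.Ioo (-1) 1 := by
    rw [Set.mem_Ioo, ← abs_lt, abs_div, abs_norm, div_lt_one hr]; exact h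
  set ρ := (‖b‖ - a.im / ‖b‖ * a.im) / √(1 - (a.im / ‖b‖) ^ 2)
  have hboost : IsSU11Conj (su11Matrix a b) (su11Matrix a.re (ρ * I)) := by
    have := (isSU11Conj_su11Matrix_norm_mul_I a b).trans (isSU11Conj_boost a.re a.im ‖b‖ hv)
    rwa [div_mul_cancel₀ _ hr.ne', sub_self, zero_div, ofReal_zero, zero_mul, add_zero] at this
  have hρ : a.re ^ 2 - ρ ^ 2 = 1 := by
    have := hboost.det_eq
    rw [det_su11Matrix, det_su11Matrix, ← ofReal_sub, ← ofReal_sub, ofReal_inj, hab,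
      normSq_ofReal, normSq_mul, normSq_I, normSq_ofReal] at this
    linear_combination this
  have hα : 1 < a.re ^ 2 := by
    rw [normSq_apply, normSq_eq_norm_sq] at hab
    nlinarith [sq_lt_sq.2 (h.trans_eq (abs_norm b).symm)]
  obtain ⟨ε, t, hε, ht, hconj⟩ :=
    exists_isSU11Conj_smul_Λh_of_sq_sub_sq hρ (by rintro h0; rw [h0] at hρ; linarith)
  exact ⟨ε, t, hε, ht, hboost.trans hconj⟩

/-- Conjugacy classes of `SU(1,1)`: every `A ∈ SU(1,1)` is conjugate in
`SU(1,1)` to `Λ_e(s)` with `s ∈ (−π, π]`, to `±Λ_p(t)` with `t ≠ 0`, or to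
`±Λ_h(t)` with `t > 0`. -/
theorem su11_conjugacy_classes (A : Matrix (Fin 2) (Fin 2) ℂ) (hA : SU11 A) :
    ∃ P : Matrix (Fin 2) (Fin 2) ℂ, SU11 P ∧
      ((∃ s : ℝ, -Real.pi < s ∧ s ≤ Real.pi ∧ P⁻¹ * A * P = Λe s) ∨
       (∃ (ε : ℂ) (t : ℝ), (ε = 1 ∨ ε = -1) ∧ t ≠ 0 ∧
          P⁻¹ * A * P = ε • Λp t) ∨
       (∃ (ε : ℂ) (t : ℝ), (ε = 1 ∨ ε = -1) ∧ 0 < t ∧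
          P⁻¹ * A * P = ε • Λh t)) := by
  obtain ⟨a, b, hab, rfl⟩ := hA.exists_eq_su11Matrix
  rcases lt_trichotomy ‖b‖ |a.im| with h | h | h
  · obtain ⟨s, hs₁, hs₂, P, hP, hPAP⟩ := exists_isSU11Conj_Λe hab (.inl h)
    exact ⟨P, hP, .inl ⟨s, hs₁, hs₂, hPAP⟩⟩
  · rcases eq_or_ne b 0 with hb | hb
    · obtain ⟨s, hs₁, hs₂, P, hP, hPAP⟩ := exists_isSU11Conj_Λe hab (.inr hb)
      exact ⟨P, hP, .inl ⟨s, hs₁, hs₂, hPAP⟩⟩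
    · obtain ⟨ε, t, hε, ht, P, hP, hPAP⟩ := exists_isSU11Conj_smul_Λp hab h hb
      exact ⟨P, hP, .inr (.inl ⟨ε, t, hε, ht, hPAP⟩)⟩
  · obtain ⟨ε, t, hε, ht, P, hP, hPAP⟩ := exists_isSU11Conj_smul_Λh hab h
    exact ⟨P, hP, .inr (.inr ⟨ε, t, hε, ht, hPAP⟩)⟩
end
end

section
/- Let A and B be 2×2 real matrices and suppose they are conjugate in SL(2,ℂ), i.e. there exists P̃ ∈ SL(2,ℂ) (a 2×2 complex matrix of determinant 1) with A·P̃ = P̃·B. Then there exists P ∈ SL(2,ℝ) (a 2×2 real matrix of determinant 1) such that P⁻¹AP = B or P⁻¹AP = e₃·B·e₃, where e₃ = diag(1,−1). -/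
open Complex Matrix

noncomputable section

private lemma aux_conj (A B P₀ : Matrix (Fin 2) (Fin 2) ℝ)
    (hd : 0 < P₀.det) (h : A * P₀ = P₀ * B) :
    ∃ P : Matrix (Fin 2) (Fin 2) ℝ, P.det = 1 ∧ P⁻¹ * A * P = B := by
  set c := (Real.sqrt P₀.det)⁻¹ with hc
  have hdet1 : (c • P₀).det = 1 := by
    rw [Matrix.det_smul]
    simp only [Fintype.card_fin, hc]
    rw [inv_pow, Real.sq_sqrt hd.le]
    exact inv_mul_cancel₀ hd.ne'
  refine ⟨c • P₀, hdet1, ?_⟩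
  have hAP : A * (c • P₀) = (c • P₀) * B := by
    rw [Matrix.mul_smul, h, Matrix.smul_mul]
  rw [Matrix.mul_assoc, hAP, ← Matrix.mul_assoc,
    Matrix.nonsing_inv_mul _ (by rw [hdet1]; exact isUnit_one), Matrix.one_mul]

private lemma aux_main (A B P₀ : Matrix (Fin 2) (Fin 2) ℝ)
    (hd : P₀.det ≠ 0) (h : A * P₀ = P₀ * B) :
    ∃ P : Matrix (Fin 2) (Fin 2) ℝ, P.det = 1 ∧
      (P⁻¹ * A * P = B ∨
       P⁻¹ * A * P = !![(1 : ℝ), 0; 0, -1] * B * !![(1 : ℝ), 0; 0, -1]) := by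
  rcases hd.lt_or_gt with hneg | hpos
  · set E : Matrix (Fin 2) (Fin 2) ℝ := !![(1:ℝ),0;0,-1] with hE
    have hEE : E * E = 1 := by
      rw [hE]
      norm_num [← Matrix.ext_iff, Matrix.mul_apply, Fin.sum_univ_two, Fin.forall_fin_two,
        Matrix.one_apply]
    have hdetE : E.det = -1 := by rw [hE]; simp [Matrix.det_fin_two]
    have hdpos : 0 < (P₀ * E).det := by
      rw [Matrix.det_mul, hdetE]; nlinarith
    have h2 : A * (P₀ * E) = (P₀ * E) * (E * B * E) := by
      calc A * (P₀ * E) = (A * P₀) * E := by rw [Matrix.mul_assoc]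
        _ = P₀ * B * E := by rw [h]
        _ = (P₀ * E) * (E * B * E) := by
            rw [Matrix.mul_assoc P₀ E (E * B * E), ← Matrix.mul_assoc E (E*B) E,
              ← Matrix.mul_assoc E E B, hEE, Matrix.one_mul, ← Matrix.mul_assoc]
    obtain ⟨P, hP1, hP2⟩ := aux_conj A (E * B * E) (P₀ * E) hdpos h2
    exact ⟨P, hP1, Or.inr hP2⟩
  · obtain ⟨P, hP1, hP2⟩ := aux_conj A B P₀ hpos h
    exact ⟨P, hP1, Or.inl hP2⟩

/-- Lemma: if two real 2×2 matrices are conjugate in `SL(2,ℂ)`, then they are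
conjugate in `SL(2,ℝ)` up to the involution `B ↦ e₃ B e₃`, `e₃ = diag(1,−1)`. -/
theorem real_conjugacy_from_complex
    (A B : Matrix (Fin 2) (Fin 2) ℝ) (Pt : Matrix (Fin 2) (Fin 2) ℂ)
    (hPt : Pt.det = 1)
    (hconj : A.map (Complex.ofReal) * Pt = Pt * B.map (Complex.ofReal)) :
    ∃ P : Matrix (Fin 2) (Fin 2) ℝ, P.det = 1 ∧
      (P⁻¹ * A * P = B ∨
       P⁻¹ * A * P = !![(1 : ℝ), 0; 0, -1] * B * !![(1 : ℝ), 0; 0, -1]) := by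
  set X : Matrix (Fin 2) (Fin 2) ℝ := Matrix.of fun i j => (Pt i j).re with hX
  set Y : Matrix (Fin 2) (Fin 2) ℝ := Matrix.of fun i j => (Pt i j).im with hY
  have hdetPt : Pt 0 0 * Pt 1 1 - Pt 0 1 * Pt 1 0 = 1 := by
    rw [← Matrix.det_fin_two]; exact hPt
  have hre : X.det - Y.det = 1 := by
    have h := congrArg Complex.re hdetPt
    simp only [Complex.sub_re, Complex.mul_re, Complex.one_re] at h
    simp only [Matrix.det_fin_two, hX, hY, Matrix.of_apply]
    linarith
  have him : X 0 0 * Y 1 1 + Y 0 0 * X 1 1 - X 0 1 * Y 1 0 - Y 0 1 * X 1 0 = 0 := by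
    have h := congrArg Complex.im hdetPt
    simp only [Complex.sub_im, Complex.mul_im, Complex.one_im] at h
    simp only [hX, hY, Matrix.of_apply]
    linarith
  have hAX : A * X = X * B := by
    ext i j
    have h := congrFun (congrFun hconj i) j
    simp only [Matrix.mul_apply, Fin.sum_univ_two, Matrix.map_apply] at h
    have hr := congrArg Complex.re h
    simp only [Complex.add_re, Complex.mul_re, Complex.ofReal_re, Complex.ofReal_im,
      zero_mul, mul_zero, sub_zero] at hr
    simp only [Matrix.mul_apply, Fin.sum_univ_two, hX, Matrix.of_apply]
    linarith
  have hAY : A * Y = Y * B := by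
    ext i j
    have h := congrFun (congrFun hconj i) j
    simp only [Matrix.mul_apply, Fin.sum_univ_two, Matrix.map_apply] at h
    have hi := congrArg Complex.im h
    simp only [Complex.add_im, Complex.mul_im, Complex.ofReal_re, Complex.ofReal_im,
      zero_mul, mul_zero, add_zero, zero_add] at hi
    simp only [Matrix.mul_apply, Fin.sum_univ_two, hY, Matrix.of_apply]
    linarith
  by_cases hXd : X.det = 0
  · -- then Y.det = -1, use X + Y
    have hYd : Y.det = -1 := by linarith
    have hXYd : (X + Y).det = -1 := by
      simp only [Matrix.det_fin_two, Matrix.add_apply] at *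
      nlinarith [him]
    have hAXY : A * (X + Y) = (X + Y) * B := by
      rw [Matrix.mul_add, Matrix.add_mul, hAX, hAY]
    exact aux_main A B (X + Y) (by rw [hXYd]; norm_num) hAXY
  · exact aux_main A B X hXd hAX
end
end

section
/- For t₁, t₂ ∈ ℝ∖{0}, the matrices Λ_p(t₁) and Λ_p(t₂) are conjugate in SU(1,1) — i.e. there exists P ∈ SU(1,1) with P·Λ_p(t₁)·P⁻¹ = Λ_p(t₂) — if and only if t₁·t₂ > 0. -/
open Complex Matrix

noncomputable section

/-- For `t₁, t₂ ≠ 0`, `Λ_p(t₁)` and `Λ_p(t₂)` are conjugate in `SU(1,1)` if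
and only if `t₁ t₂ > 0`. -/
theorem parabolic_conjugacy_iff (t₁ t₂ : ℝ) (h₁ : t₁ ≠ 0) (h₂ : t₂ ≠ 0) :
    (∃ P : Matrix (Fin 2) (Fin 2) ℂ, SU11 P ∧ P * Λp t₁ * P⁻¹ = Λp t₂) ↔
      0 < t₁ * t₂ := by
  constructor
  · rintro ⟨P, ⟨hdet, he3⟩, hconj⟩
    have hu : IsUnit P.det := by rw [hdet]; exact isUnit_one
    have hcomm : P * Λp t₁ = Λp t₂ * P := by
      have h := congrArg (· * P) hconj
      simpa [Matrix.mul_assoc, Matrix.nonsing_inv_mul P hu] using h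
    have E00 := congrFun (congrFun he3 0) 0
    have E10 := congrFun (congrFun he3 1) 0
    have C00 := congrFun (congrFun hcomm 0) 0
    have C01 := congrFun (congrFun hcomm 0) 1
    rw [Matrix.det_fin_two] at hdet
    simp [e3, Λp, Matrix.mul_apply, Fin.sum_univ_two, Matrix.conjTranspose_apply]
      at E00 E10 C00 C01
    have hd : P 1 1 = starRingEnd ℂ (P 0 0) := by
      linear_combination (starRingEnd ℂ (P 0 0)) * hdet - P 1 1 * E00 + P 0 1 * E10
    have hc : P 1 0 = starRingEnd ℂ (P 0 1) := by
      linear_combination (starRingEnd ℂ (P 0 1)) * hdet + P 0 0 * E10 - P 1 0 * E00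
    rw [hc] at C00
    rw [hd] at C01
    have ht2 : (t₂ : ℂ) ≠ 0 := Complex.ofReal_ne_zero.mpr h₂
    have HS : P 0 0 + P 0 1 = starRingEnd ℂ (P 0 0) + starRingEnd ℂ (P 0 1) := by
      have h0 : Complex.I * t₂ *
          ((P 0 0 + P 0 1) - (starRingEnd ℂ (P 0 0) + starRingEnd ℂ (P 0 1))) = 0 := by
        linear_combination -C00 - C01
      rcases mul_eq_zero.mp h0 with h | h
      · rcases mul_eq_zero.mp h with h' | h'
        · exact absurd h' Complex.I_ne_zero
        · exact absurd h' ht2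
      · exact sub_eq_zero.mp h
    have key : (t₁ : ℂ) * ((P 0 0 + P 0 1) * (P 0 0 + P 0 1)) = t₂ := by
      linear_combination (-Complex.I) * (P 0 0 + P 0 1) * C00 + (t₂ : ℂ) * (P 0 0) * HS +
        (t₂ : ℂ) * E00 +
        ((t₁ : ℂ) * (P 0 0 + P 0 1) ^ 2 -
          (t₂ : ℂ) * (P 0 0 - starRingEnd ℂ (P 0 1)) * (P 0 0 + P 0 1)) * Complex.I_sq
    set s : ℂ := P 0 0 + P 0 1 with hs
    have him : s.im = 0 := by
      have hcs : (starRingEnd ℂ) s = s := by rw [hs, map_add]; exact HS.symm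
      exact Complex.conj_eq_iff_im.mp hcs
    have hre : t₁ * (s.re * s.re) = t₂ := by
      have := congrArg Complex.re key
      simpa [Complex.mul_re, him] using this
    have hsre : s.re ≠ 0 := by
      intro h
      rw [h] at hre
      simp at hre
      exact h₂ hre.symm
    have hkey2 : t₁ * t₂ = (t₁ * s.re) ^ 2 := by rw [← hre]; ring
    rw [hkey2]
    positivity
  · intro h
    have hq : 0 < t₂ / t₁ := by
      have : t₂ / t₁ = (t₁ * t₂) / t₁ ^ 2 := by field_simp
      rw [this]; positivity
    set L : ℝ := Real.sqrt (t₂ / t₁) with hL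
    have hLpos : 0 < L := Real.sqrt_pos.mpr hq
    have hLne : L ≠ 0 := ne_of_gt hLpos
    have hL2 : L ^ 2 = t₂ / t₁ := Real.sq_sqrt hq.le
    set α : ℝ := (L + L⁻¹) / 2 with hα
    set β : ℝ := (L - L⁻¹) / 2 with hβ
    have h1 : α ^ 2 - β ^ 2 = 1 := by rw [hα, hβ]; field_simp; ring
    have hab : α + β = L := by rw [hα, hβ]; ring
    have hk : (α + β) ^ 2 * t₁ = t₂ := by rw [hab, hL2]; field_simp
    have h1c : (α : ℂ) ^ 2 - (β : ℂ) ^ 2 = 1 := by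
      exact_mod_cast congrArg (Complex.ofReal) h1
    have hkc : ((α : ℂ) + β) ^ 2 * t₁ = t₂ := by
      exact_mod_cast congrArg (Complex.ofReal) hk
    refine ⟨!![(α : ℂ), β; β, α], ⟨?_, ?_⟩, ?_⟩
    · rw [Matrix.det_fin_two_of]; linear_combination h1c
    · ext i j
      fin_cases i <;> fin_cases j <;>
        simp [e3, Matrix.mul_apply, Fin.sum_univ_two, Matrix.conjTranspose_apply,
          Complex.conj_ofReal] <;>
        first
          | ring1
          | linear_combination h1c
          | linear_combination -h1c
          | linear_combination (2:ℂ) * h1c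
          | linear_combination (-2:ℂ) * h1c
    · have hPQ : !![(α : ℂ), β; β, α] * !![(α : ℂ), -β; -β, α] = 1 := by
        ext i j
        fin_cases i <;> fin_cases j <;>
          simp [Matrix.mul_apply, Fin.sum_univ_two, Matrix.one_apply] <;>
          first
            | ring1
            | linear_combination h1c
            | linear_combination -h1c
      rw [Matrix.inv_eq_right_inv hPQ]
      ext i j
      fin_cases i <;> fin_cases j <;>
        simp [Λp, Matrix.mul_apply, Fin.sum_univ_two] <;>
        first
          | ring1
          | linear_combination h1c + Complex.I * hkc
          | linear_combination -h1c + Complex.I * hkc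
          | linear_combination h1c - Complex.I * hkc
          | linear_combination -h1c - Complex.I * hkc
          | linear_combination Complex.I * hkc
          | linear_combination -Complex.I * hkc
end
end

section
/- If s, s' ∈ (−π, π] and there exists P ∈ SU(1,1) with P⁻¹·Λ_e(s)·P = Λ_e(s'), then s = s'. In particular, for s ∈ (0, π) the matrices Λ_e(s) and Λ_e(−s) are not conjugate in SU(1,1): for every elliptic element A of SU(1,1) there is a unique s ∈ (−π, π] such that A is conjugate in SU(1,1) to Λ_e(s). -/
open Complex Matrix

noncomputable section

/-! If `P⁻¹ Λ_e(s) P = Λ_e(s')` then `Λ_e(s) P = P Λ_e(s')`, whose `(0,0)` entry reads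
`e^{is} a = a e^{is'}` with `a = P₀₀`. The `(0,0)` entry of `P e₃ P* = e₃` gives
`|a|² = 1 + |P₀₁|²`, so `a ≠ 0` and `e^{is} = e^{is'}`; since `t ↦ e^{it}` is injective on
`(-π, π]`, `s = s'`. -/

open ComplexConjugate

lemma Matrix.mul_eq_mul_of_inv_mul_mul_eq {n α : Type*} [Fintype n] [DecidableEq n] [CommRing α]
    {A B P : Matrix n n α} (hP : IsUnit P.det) (h : P⁻¹ * A * P = B) : A * P = P * B := by
  rw [← h, ← Matrix.mul_assoc, ← Matrix.mul_assoc, mul_nonsing_inv _ hP, Matrix.one_mul]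

lemma exp_I_mul_injOn : Set.InjOn (fun t : ℝ => exp (I * t)) (Set.Ioc (-Real.pi) Real.pi) := by
  intro x hx y hy hxy
  refine Circle.exp_injOn_Ioc (by linarith) hx hy (Circle.ext ?_)
  simpa only [Circle.coe_exp, mul_comm] using hxy

lemma normSq_apply_zero_zero_of_mul_e3_mul_conjTranspose {P : Matrix (Fin 2) (Fin 2) ℂ}
    (hP : P * e3 * Pᴴ = e3) : normSq (P 0 0) = 1 + normSq (P 0 1) := by
  have h00 : P 0 0 * conj (P 0 0) - P 0 1 * conj (P 0 1) = 1 := by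
    simpa [e3, Matrix.mul_apply, Fin.sum_univ_two, sub_eq_add_neg] using congrFun (congrFun hP 0) 0
  apply ofReal_injective
  push_cast [← mul_conj]
  linear_combination h00

lemma apply_zero_zero_ne_zero_of_mul_e3_mul_conjTranspose {P : Matrix (Fin 2) (Fin 2) ℂ}
    (hP : P * e3 * Pᴴ = e3) : P 0 0 ≠ 0 := by
  rw [← normSq_pos, normSq_apply_zero_zero_of_mul_e3_mul_conjTranspose hP]
  linarith [normSq_nonneg (P 0 1)]

lemma Λe_mul_apply_zero_zero (t : ℝ) (M : Matrix (Fin 2) (Fin 2) ℂ) :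
    (Λe t * M) 0 0 = exp (I * t) * M 0 0 := by
  simp [Λe, Matrix.mul_apply, Fin.sum_univ_two]

lemma mul_Λe_apply_zero_zero (t : ℝ) (M : Matrix (Fin 2) (Fin 2) ℂ) :
    (M * Λe t) 0 0 = M 0 0 * exp (I * t) := by
  simp [Λe, Matrix.mul_apply, Fin.sum_univ_two]

lemma exp_I_mul_eq_of_Λe_mul_eq_mul_Λe {s s' : ℝ} {P : Matrix (Fin 2) (Fin 2) ℂ}
    (hP : P 0 0 ≠ 0) (h : Λe s * P = P * Λe s') : exp (I * s) = exp (I * s') := by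
  have h00 := congrFun (congrFun h 0) 0
  rw [Λe_mul_apply_zero_zero, mul_Λe_apply_zero_zero, mul_comm] at h00
  exact mul_left_cancel₀ hP h00

/-- For `s, s' ∈ (−π, π]`, if `Λ_e(s)` and `Λ_e(s')` are conjugate in
`SU(1,1)` then `s = s'`; in particular the representative `Λ_e(s)` of an
elliptic conjugacy class of `SU(1,1)` is unique. -/
theorem elliptic_representative_unique
    (s s' : ℝ) (hs₁ : -Real.pi < s) (hs₂ : s ≤ Real.pi)
    (hs₁' : -Real.pi < s') (hs₂' : s' ≤ Real.pi)
    (P : Matrix (Fin 2) (Fin 2) ℂ) (hP : SU11 P)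
    (h : P⁻¹ * Λe s * P = Λe s') : s = s' := by
  obtain ⟨hdet, hrel⟩ := hP
  have hcomm : Λe s * P = P * Λe s' :=
    Matrix.mul_eq_mul_of_inv_mul_mul_eq (by simp [hdet]) h
  exact exp_I_mul_injOn ⟨hs₁, hs₂⟩ ⟨hs₁', hs₂'⟩
    (exp_I_mul_eq_of_Λe_mul_eq_mul_Λe
      (apply_zero_zero_ne_zero_of_mul_e3_mul_conjTranspose hrel) hcomm)
end
end

section
/- Let p ∈ ℂ, let m ≥ 1 be an integer, and let h be a nonconstant holomorphic function on a neighborhood of p such that h − h(p) has a zero of order exactly m at p (i.e. h(z) = a + b(z−p)^m + higher-order terms with b ≠ 0). Then (z−p)²·S(h)(z) → (1−m²)/2 as z → p, where S(h) is the Schwarzian derivative of h (defined on a punctured neighborhood of p away from the zeros of h', which do not accumulate at p). -/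
/-!
Near `p` we have `h' = (z - p)^(m-1) ψ` with `ψ` holomorphic and `ψ p ≠ 0`, so
`h''/h' = logDeriv h'` is `(m-1)/(z - p)` plus the holomorphic function `ψ'/ψ`.
For any `F = c/(z - p) + g` with `g` holomorphic, `(z - p)² (F' - F²/2)` is
`-c - c²/2` plus terms vanishing at `p`; for `c = m - 1` this is `(1 - m²)/2`.
-/

open Complex Filter

noncomputable section

/-- The Schwarzian derivative `S(f) = (f''/f')' - (1/2)(f''/f')²`. -/
def schwarzian (f : ℂ → ℂ) (z : ℂ) : ℂ :=
  deriv (fun w => deriv (deriv f) w / deriv f w) z -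
    (1 / 2) * (deriv (deriv f) z / deriv f z) ^ 2

open Topology

section

variable {𝕜 : Type*} [NontriviallyNormedField 𝕜]

theorem eventuallyEq_deriv_of_eventuallyEq_add_sub_pow_succ_mul {f φ : 𝕜 → 𝕜} {p a : 𝕜}
    {n : ℕ} (hφ : ∀ᶠ z in 𝓝 p, DifferentiableAt 𝕜 φ z)
    (hf : f =ᶠ[𝓝 p] fun z => a + (z - p) ^ (n + 1) * φ z) :
    deriv f =ᶠ[𝓝 p] fun z => (z - p) ^ n * ((n + 1) * φ z + (z - p) * deriv φ z) := by
  filter_upwards [hf.deriv, hφ] with z hz hφz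
  have hpow : HasDerivAt (fun w => (w - p) ^ (n + 1)) ((n + 1 : ℕ) * (z - p) ^ n) z := by
    simpa using (hasDerivAt_pow (n + 1) (z - p)).comp_sub_const z p
  rw [hz, ((hpow.fun_mul hφz.hasDerivAt).const_add a).deriv]
  push_cast
  ring

theorem logDeriv_sub_pow_mul {ψ : 𝕜 → 𝕜} {p z : 𝕜} (n : ℕ) (hz : z ≠ p)
    (hψ : DifferentiableAt 𝕜 ψ z) (hψz : ψ z ≠ 0) :
    logDeriv (fun w => (w - p) ^ n * ψ w) z = n / (z - p) + logDeriv ψ z := by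
  have hzp : z - p ≠ 0 := sub_ne_zero.mpr hz
  rw [logDeriv_mul (f := fun w => (w - p) ^ n) z (pow_ne_zero n hzp) hψz (by fun_prop) hψ,
    logDeriv_fun_pow (by fun_prop), logDeriv_apply, deriv_sub_const, deriv_id'']
  field_simp

theorem logDeriv_eventuallyEq_of_eventuallyEq_sub_pow_mul [CompleteSpace 𝕜]
    {F ψ : 𝕜 → 𝕜} {p : 𝕜} {n : ℕ} (hψ : AnalyticAt 𝕜 ψ p) (hψp : ψ p ≠ 0)
    (hF : F =ᶠ[𝓝 p] fun z => (z - p) ^ n * ψ z) :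
    logDeriv F =ᶠ[𝓝[≠] p] fun z => n / (z - p) + logDeriv ψ z := by
  refine (logDeriv_congr_nhdsNE (hF.filter_mono nhdsWithin_le_nhds)).trans ?_
  filter_upwards [self_mem_nhdsWithin, nhdsWithin_le_nhds hψ.eventually_analyticAt,
    nhdsWithin_le_nhds (hψ.continuousAt.eventually_ne hψp)] with z hz hψz hψz0
  exact logDeriv_sub_pow_mul n hz hψz.differentiableAt hψz0

theorem tendsto_sub_sq_mul_deriv_sub_half_sq [CompleteSpace 𝕜] [CharZero 𝕜] {F g : 𝕜 → 𝕜}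
    {p c : 𝕜} (hg : AnalyticAt 𝕜 g p) (hF : F =ᶠ[𝓝[≠] p] fun z => c / (z - p) + g z) :
    Tendsto (fun z => (z - p) ^ 2 * (deriv F z - 1 / 2 * F z ^ 2)) (𝓝[≠] p)
      (𝓝 (-c - c ^ 2 / 2)) := by
  set G : 𝕜 → 𝕜 := fun z => -c - c ^ 2 / 2 - c * (z - p) * g z
    + (z - p) ^ 2 * (deriv g z - g z ^ 2 / 2)
  have hG : ContinuousAt G p := by
    have := hg.continuousAt
    have := hg.deriv.continuousAt
    fun_prop
  have hGp : G p = -c - c ^ 2 / 2 := by simp [G]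
  refine (hGp ▸ hG.tendsto.mono_left nhdsWithin_le_nhds).congr' ?_
  filter_upwards [self_mem_nhdsWithin, hF, hF.nhdsNE_deriv,
    nhdsWithin_le_nhds hg.eventually_analyticAt] with z hz hFz hF'z hgz
  have hzp : z - p ≠ 0 := sub_ne_zero.mpr hz
  have hpole : HasDerivAt (fun w => c / (w - p)) (-c / (z - p) ^ 2) z := by
    simpa [div_eq_mul_inv] using ((hasDerivAt_inv hzp).comp_sub_const z p).const_mul c
  rw [hFz, hF'z, (hpole.fun_add hgz.differentiableAt.hasDerivAt).deriv]
  simp only [G]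
  field_simp
  ring

end

theorem schwarzian_eq_logDeriv_deriv (f : ℂ → ℂ) (z : ℂ) :
    schwarzian f z = deriv (logDeriv (deriv f)) z - 1 / 2 * logDeriv (deriv f) z ^ 2 := rfl

/-- If `h − h(p)` has a zero of order exactly `m ≥ 1` at `p` (i.e.
`h(z) = h(p) + (z−p)^m φ(z)` near `p` with `φ` holomorphic, `φ(p) ≠ 0`),
then `(z−p)² S(h)(z) → (1−m²)/2` as `z → p`. -/
theorem schwarzian_asymptotics_at_ramification_point
    (p : ℂ) (m : ℕ) (hm : 1 ≤ m) (h φ : ℂ → ℂ)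
    (hφ : AnalyticAt ℂ φ p) (hφ0 : φ p ≠ 0)
    (hh : ∀ᶠ z in nhds p, h z = h p + (z - p) ^ m * φ z) :
    Tendsto (fun z : ℂ => (z - p) ^ 2 * schwarzian h z)
      (nhdsWithin p {p}ᶜ) (nhds ((1 - (m : ℂ) ^ 2) / 2)) := by
  obtain ⟨n, rfl⟩ := Nat.exists_eq_add_of_le' hm
  set ψ : ℂ → ℂ := fun z => (n + 1) * φ z + (z - p) * deriv φ z
  have hψ : AnalyticAt ℂ ψ p := by fun_prop
  have hψp : ψ p ≠ 0 := by simpa [ψ] using mul_ne_zero (Nat.cast_add_one_ne_zero n) hφ0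
  have hderiv : deriv h =ᶠ[𝓝 p] fun z => (z - p) ^ n * ψ z :=
    eventuallyEq_deriv_of_eventuallyEq_add_sub_pow_succ_mul
      (hφ.eventually_analyticAt.mono fun _ hz => hz.differentiableAt) hh
  have hlim := tendsto_sub_sq_mul_deriv_sub_half_sq (hψ.deriv.div hψ hψp)
    (logDeriv_eventuallyEq_of_eventuallyEq_sub_pow_mul hψ hψp hderiv)
  simp only [schwarzian_eq_logDeriv_deriv]
  convert hlim using 2
  push_cast
  ring
end
end

section
/- Let h be a holomorphic function on the punctured unit disk Δ* = {z ∈ ℂ : 0 < |z| < 1} such that |exp(i·h(z))| ≤ 1/|z| for all z ∈ Δ*. Then h extends to a holomorphic function on the whole open unit disk Δ = {|z| < 1}. (This is the single-valuedness argument in the parabolic case of the paper's regular-singularity theorem: z·exp(i·h) is bounded, so exp(i·h) = z^m·φ with φ holomorphic nonvanishing, and single-valuedness of h forces m = 0.) -/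
open Complex Metric Filter Set Topology Function

/-!
Each root `exp (I h / k)`, `k ≥ 2`, is bounded by `‖z‖ ^ (-1 / k)`, so it extends holomorphically
across `0`. The extension of `exp (I h / 2)` then has an analytic `(n + 1)`-st root for every `n`,
so its order of vanishing at `0` is divisible by every `n + 1`, hence zero: `exp (I h)` extends to
a holomorphic `Ψ` with `Ψ 0 ≠ 0`. On a small punctured disc `I h - log (Ψ / Ψ 0)` has constant
exponential, so by connectedness it is constant, and `h` extends.
-/
theorem isPreconnected_ball_diff_singleton (c : ℂ) (r : ℝ) :
    IsPreconnected (ball c r \ {c}) := by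
  rcases le_or_gt r 0 with hr | hr
  · simp [ball_eq_empty.mpr hr, isPreconnected_empty]
  have himage : ball c r \ {c} = (fun w => c + exp w) '' {w : ℂ | w.re < Real.log r} := by
    ext z
    simp only [Set.mem_sdiff, mem_ball, dist_eq_norm, mem_singleton_iff, mem_image, mem_ofPred_eq]
    constructor
    · rintro ⟨hzr, hzc⟩
      have hz : z - c ≠ 0 := sub_ne_zero.mpr hzc
      refine ⟨log (z - c), ?_, by rw [exp_log hz]; ring⟩
      rw [log_re]
      exact Real.log_lt_log (norm_pos_iff.mpr hz) hzr
    · rintro ⟨w, hw, rfl⟩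
      refine ⟨?_, by simp [exp_ne_zero w]⟩
      rw [add_sub_cancel_left, norm_exp]
      exact (Real.lt_log_iff_exp_lt hr).mp hw
  rw [himage]
  exact ((convex_halfSpace_re_lt _).isPreconnected).image _ (by fun_prop)

theorem IsOpen.exists_eq_const_of_cexp_eq_const {U : Set ℂ} {f : ℂ → ℂ} {b : ℂ}
    (hU : IsOpen U) (hU' : IsPreconnected U) (hf : DifferentiableOn ℂ f U)
    (hexp : ∀ z ∈ U, exp (f z) = b) : ∃ a, ∀ z ∈ U, f z = a := by
  refine hU.exists_is_const_of_deriv_eq_zero hU' hf fun z hz => ?_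
  have hfz := (hf.differentiableAt (hU.mem_nhds hz)).hasDerivAt
  have hconst : (fun w => exp (f w)) =ᶠ[𝓝 z] fun _ => b :=
    eventually_of_mem (hU.mem_nhds hz) hexp
  have := hfz.cexp.unique ((hasDerivAt_const z b).congr_of_eventuallyEq hconst)
  simpa [exp_ne_zero] using this

theorem norm_cexp_div_natCast (w : ℂ) (n : ℕ) :
    ‖exp (w / n)‖ = ‖exp w‖ ^ ((n : ℝ)⁻¹) := by
  rw [norm_exp, norm_exp, ← Real.exp_mul, div_natCast_re, div_eq_mul_inv]

theorem exists_analyticAt_eventuallyEq_of_norm_le_rpow {f : ℂ → ℂ} {c : ℂ} {a : ℝ} (ha : a < 1)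
    (hd : ∀ᶠ z in 𝓝[≠] c, DifferentiableAt ℂ f z)
    (hb : ∀ᶠ z in 𝓝[≠] c, ‖f z‖ ≤ ‖z - c‖ ^ (-a)) :
    ∃ F, AnalyticAt ℂ F c ∧ f =ᶠ[𝓝[≠] c] F := by
  refine ⟨update f c (limUnder (𝓝[≠] c) f), ?_, (update_eventuallyEq_nhdsNE _ _ _ _).symm⟩
  have hs : insert c {z | DifferentiableAt ℂ f z} ∈ 𝓝 c := insert_mem_nhds_iff.mpr hd
  refine DifferentiableOn.analyticAt ?_ hs
  refine differentiableOn_update_limUnder_insert_of_isLittleO hd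
    (fun z hz => (show DifferentiableAt ℂ f z from hz).differentiableWithinAt) ?_
  refine (Asymptotics.isLittleO_iff_tendsto' (eventually_nhdsWithin_of_forall fun z hz h0 =>
    absurd (inv_eq_zero.mp h0) (sub_ne_zero.mpr hz))).mpr ?_
  have hlim : Tendsto (fun z => ‖z - c‖ ^ (1 - a) + ‖z - c‖ * ‖f c‖) (𝓝[≠] c) (𝓝 0) := by
    have : ContinuousAt (fun z => ‖z - c‖ ^ (1 - a) + ‖z - c‖ * ‖f c‖) c :=
      ((continuous_norm.comp (continuous_sub_right c)).continuousAt.rpow_const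
        (Or.inr (by linarith))).add (by fun_prop)
    simpa [Real.zero_rpow (by linarith : 1 - a ≠ 0)] using this.tendsto.mono_left nhdsWithin_le_nhds
  refine squeeze_zero_norm' ?_ hlim
  filter_upwards [hb, self_mem_nhdsWithin] with z hz hzc
  have hpos : 0 < ‖z - c‖ := norm_pos_iff.mpr (sub_ne_zero.mpr hzc)
  calc ‖(f z - f c) / (z - c)⁻¹‖ = ‖z - c‖ * ‖f z - f c‖ := by
        rw [div_inv_eq_mul, norm_mul, mul_comm]
    _ ≤ ‖z - c‖ * (‖z - c‖ ^ (-a) + ‖f c‖) :=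
      mul_le_mul_of_nonneg_left ((norm_sub_le _ _).trans (by gcongr)) hpos.le
    _ = ‖z - c‖ ^ (1 - a) + ‖z - c‖ * ‖f c‖ := by
      rw [mul_add, Real.rpow_sub hpos, Real.rpow_one, Real.rpow_neg hpos.le, div_eq_mul_inv]

theorem apply_ne_zero_of_forall_exists_analyticAt_pow_eventuallyEq {𝕜 : Type*}
    [NontriviallyNormedField 𝕜] {F : 𝕜 → 𝕜} {c : 𝕜} (hF : ¬ ∀ᶠ z in 𝓝 c, F z = 0)
    (hroot : ∀ n : ℕ, ∃ G, AnalyticAt 𝕜 G c ∧ F =ᶠ[𝓝 c] G ^ (n + 1)) : F c ≠ 0 := by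
  intro hFc
  obtain ⟨M, hM⟩ := ENat.ne_top_iff_exists.mp fun h => hF (analyticOrderAt_eq_top.mp h)
  obtain ⟨G, hG, hFG⟩ := hroot M
  have hord : analyticOrderAt F c = (M + 1) • analyticOrderAt G c := by
    rw [analyticOrderAt_congr hFG, analyticOrderAt_pow hG]
  have hM0 : M ≠ 0 := by
    rintro rfl
    have := analyticOrderAt_eq_zero.mp hM.symm
    exact this.elim (· ((hG.pow _).congr hFG.symm)) (· hFc)
  rw [← hM] at hord
  generalize analyticOrderAt G c = m at hord
  induction m using ENat.recTopCoe with
  | top => simp at hord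
  | coe m =>
    rw [nsmul_eq_mul] at hord
    have : M = (M + 1) * m := by exact_mod_cast hord
    rcases m with _ | m
    · exact hM0 (by simpa using this)
    · nlinarith

theorem exists_analyticAt_cexp_eventuallyEq_of_norm_cexp_le {g : ℂ → ℂ} {c : ℂ}
    (hd : ∀ᶠ z in 𝓝[≠] c, DifferentiableAt ℂ g z)
    (hb : ∀ᶠ z in 𝓝[≠] c, ‖exp (g z)‖ ≤ ‖z - c‖⁻¹) :
    ∃ Ψ, AnalyticAt ℂ Ψ c ∧ Ψ c ≠ 0 ∧ (fun z => exp (g z)) =ᶠ[𝓝[≠] c] Ψ := by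
  have hroot : ∀ n : ℕ, ∃ G, AnalyticAt ℂ G c ∧
      (fun z => exp (g z / (2 * (n + 1) : ℕ))) =ᶠ[𝓝[≠] c] G := by
    intro n
    refine exists_analyticAt_eventuallyEq_of_norm_le_rpow (a := ((2 * (n + 1) : ℕ) : ℝ)⁻¹)
      (inv_lt_one_of_one_lt₀ (by norm_cast; omega)) ?_ ?_
    · filter_upwards [hd] with z hz using (hz.div_const _).cexp
    · filter_upwards [hb] with z hz
      rw [norm_cexp_div_natCast, Real.rpow_neg (norm_nonneg _), ← Real.inv_rpow (norm_nonneg _)]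
      exact Real.rpow_le_rpow (norm_nonneg _) hz (by positivity)
  choose G hG hgG using hroot
  have hpow : ∀ n, G 0 =ᶠ[𝓝 c] G n ^ (n + 1) := by
    intro n
    rw [← (hG 0).continuousAt.eventuallyEq_nhds_iff_eventuallyEq_nhdsNE
      ((hG n).pow _).continuousAt]
    filter_upwards [hgG 0, hgG n] with z h0 hn
    rw [← h0, Pi.pow_apply, ← hn, ← exp_nat_mul]
    congr 1
    push_cast
    field_simp
  have hG0 : ¬ ∀ᶠ z in 𝓝 c, G 0 z = 0 := fun h =>
    let ⟨_, hz, h0⟩ := ((hgG 0).and (nhdsWithin_le_nhds h)).exists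
    exp_ne_zero _ (hz.trans h0)
  refine ⟨G 0 ^ 2, (hG 0).pow 2,
    pow_ne_zero _ (apply_ne_zero_of_forall_exists_analyticAt_pow_eventuallyEq hG0
      fun n => ⟨G n, hG n, hpow n⟩), ?_⟩
  filter_upwards [hgG 0] with z hz
  rw [Pi.pow_apply, ← hz, ← exp_nat_mul]
  congr 1
  push_cast
  ring

theorem exists_differentiableAt_eventuallyEq_of_cexp_eventuallyEq {g Ψ : ℂ → ℂ} {c : ℂ}
    (hg : ∀ᶠ z in 𝓝[≠] c, DifferentiableAt ℂ g z) (hΨ : AnalyticAt ℂ Ψ c) (hΨc : Ψ c ≠ 0)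
    (hexp : (fun z => exp (g z)) =ᶠ[𝓝[≠] c] Ψ) :
    ∃ φ, DifferentiableAt ℂ φ c ∧ g =ᶠ[𝓝[≠] c] φ := by
  set L : ℂ → ℂ := fun z => log (Ψ z / Ψ c)
  have hL : ∀ᶠ z in 𝓝 c, DifferentiableAt ℂ L z ∧ exp (L z) = Ψ z / Ψ c := by
    have hslit : ∀ᶠ z in 𝓝 c, Ψ z / Ψ c ∈ slitPlane :=
      (hΨ.continuousAt.div_const _).eventually_mem
        (isOpen_slitPlane.mem_nhds (by simp [div_self hΨc]))
    filter_upwards [hslit, hΨ.eventually_analyticAt] with z hz hΨz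
    exact ⟨(hΨz.differentiableAt.div_const _).clog hz, exp_log (slitPlane_ne_zero hz)⟩
  obtain ⟨r, hr0, hr⟩ := Metric.mem_nhdsWithin_iff.mp (hg.and (hexp.and (nhdsWithin_le_nhds hL)))
  obtain ⟨a, ha⟩ := (isOpen_ball.sdiff isClosed_singleton).exists_eq_const_of_cexp_eq_const
    (isPreconnected_ball_diff_singleton c r) (f := fun z => g z - L z) (b := Ψ c)
    (fun z hz => ((hr hz).1.sub (hr hz).2.2.1).differentiableWithinAt)
    (fun z hz => by
      obtain ⟨-, hΨz, -, hLz⟩ := hr hz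
      have : Ψ z ≠ 0 := hΨz ▸ exp_ne_zero _
      rw [exp_sub, show exp (g z) = Ψ z from hΨz, hLz]
      field_simp)
  refine ⟨fun z => a + L z, (differentiableAt_const _).add hL.self_of_nhds.1, ?_⟩
  filter_upwards [inter_mem_nhdsWithin {c}ᶜ (ball_mem_nhds c hr0)] with z hz
  exact sub_eq_iff_eq_add.mp (ha z ⟨hz.2, hz.1⟩)

theorem differentiableOn_update_of_eventuallyEq_nhdsNE {E : Type*} [NormedAddCommGroup E]
    [NormedSpace ℂ E] [CompleteSpace E] {f φ : ℂ → E} {s : Set ℂ} {c : ℂ} (hs : s ∈ 𝓝 c)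
    (hf : DifferentiableOn ℂ f (s \ {c})) (hφ : ContinuousAt φ c) (hfφ : f =ᶠ[𝓝[≠] c] φ) :
    DifferentiableOn ℂ (update f c (φ c)) s := by
  rw [← differentiableOn_compl_singleton_and_continuousAt_iff hs]
  exact ⟨hf.congr fun z hz => update_of_ne hz.2 _ _, continuousAt_update_same.mpr
    ((hφ.tendsto.mono_left nhdsWithin_le_nhds).congr' hfφ.symm)⟩

/-- If `h` is holomorphic on the punctured unit disk and
`|exp(i h(z))| ≤ 1/|z|` there, then `h` extends holomorphically to the whole
open unit disk. -/
theorem holomorphic_extension_from_exp_bound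
    (h : ℂ → ℂ)
    (hh : DifferentiableOn ℂ h {z : ℂ | z ≠ 0 ∧ ‖z‖ < 1})
    (hbd : ∀ z : ℂ, z ≠ 0 → ‖z‖ < 1 →
      ‖Complex.exp (Complex.I * h z)‖ ≤ 1 / ‖z‖) :
    ∃ H : ℂ → ℂ, DifferentiableOn ℂ H (ball (0 : ℂ) 1) ∧
      ∀ z : ℂ, z ≠ 0 → ‖z‖ < 1 → H z = h z := by
  have hS : {z : ℂ | z ≠ 0 ∧ ‖z‖ < 1} = ball 0 1 \ {0} := by ext z; simp [and_comm]
  rw [hS] at hh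
  have hS_mem : ball (0 : ℂ) 1 \ {0} ∈ 𝓝[≠] 0 :=
    sdiff_mem_nhdsWithin_compl (ball_mem_nhds 0 one_pos) _
  have hd : ∀ᶠ z in 𝓝[≠] 0, DifferentiableAt ℂ (fun z => I * h z) z :=
    eventually_of_mem hS_mem fun z hz =>
      ((hh z hz).differentiableAt ((isOpen_ball.sdiff isClosed_singleton).mem_nhds hz)).const_mul I
  have hb : ∀ᶠ z in 𝓝[≠] 0, ‖exp (I * h z)‖ ≤ ‖z - 0‖⁻¹ :=
    eventually_of_mem hS_mem fun z hz => by simpa using hbd z hz.2 (mem_ball_zero_iff.mp hz.1)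
  obtain ⟨Ψ, hΨ, hΨ0, hexp⟩ := exists_analyticAt_cexp_eventuallyEq_of_norm_cexp_le hd hb
  obtain ⟨φ, hφ, hφh⟩ := exists_differentiableAt_eventuallyEq_of_cexp_eventuallyEq hd hΨ hΨ0 hexp
  have hhφ : h =ᶠ[𝓝[≠] 0] fun z => -I * φ z := by
    filter_upwards [hφh] with z hz
    rw [← hz, ← mul_assoc]
    simp
  exact ⟨update h 0 (-I * φ 0), differentiableOn_update_of_eventuallyEq_nhdsNE
    (ball_mem_nhds 0 one_pos) hh (hφ.continuousAt.const_mul (-I)) hhφ,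
    fun z hz _ => update_of_ne hz _ _⟩
end
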